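/- arXiv:1807.01551 — 6 statements merged into one kernel-verified Lean document; each statement's English description precedes it below -/
import Mathlib

section
/- Let X be a simplicial complex on a vertex set V of size n, all of whose missing faces have dimension at most d. Then for every k ≥ -1, the minimal eigenvalue μ_k(X) of the reduced k-dimensional Laplacian of X satisfies μ_k(X) ≥ (d+1)(δ_k + k + 1) − d·n, where δ_k is the minimal degree of a k-dimensional simplex of X. -/
open Matrix BigOperators

/-- A finite abstract simplicial complex on vertex type `V` (the empty face is included). -/
structure SC (V : Type) [DecidableEq V] where
  faces : Finset (Finset V)
  empty_mem : ∅ ∈ faces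
  down_closed : ∀ σ ∈ faces, ∀ τ ⊆ σ, τ ∈ faces

namespace SC

variable {V : Type} [Fintype V] [DecidableEq V] [LinearOrder V] (X : SC V)

/-- The degree of a simplex: the number of cofacets. -/
def deg (σ : Finset V) : ℕ :=
  (X.faces.filter fun η => σ ⊆ η ∧ η.card = σ.card + 1).card

/-- Faces with `m` vertices, i.e. of dimension `m - 1`. -/
abbrev face (m : ℕ) := {σ : Finset V // σ ∈ X.faces ∧ σ.card = m}

/-- `sgn σ τ` for `τ ⊆ σ` with `|σ \ τ| = 1`: the sign `(-1)^i` where `i` is the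
position of the vertex of `σ \ τ` in the increasing ordering of `σ`. -/
def sgn (σ τ : Finset V) : ℝ :=
  ∑ u ∈ σ \ τ, (-1 : ℝ) ^ (σ.filter fun w => w < u).card

/-- The matrix of the simplicial coboundary map from `(m-1)`-cochains to `m`-cochains
(cochains are indexed by the number of vertices of the faces). -/
def CB (m : ℕ) : Matrix (X.face (m + 1)) (X.face m) ℝ :=
  fun σ τ => if τ.1 ⊆ σ.1 then sgn σ.1 τ.1 else 0

/-- The reduced Laplacian `L_{m-1} = d_{m-2} ∂_{m-2} + ∂_{m-1} d_{m-1}` acting on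
cochains supported on faces with `m` vertices. -/
def Lap : (m : ℕ) → Matrix (X.face m) (X.face m) ℝ
  | 0 => (X.CB 0)ᵀ * X.CB 0
  | m + 1 => (X.CB (m + 1))ᵀ * X.CB (m + 1) + X.CB m * (X.CB m)ᵀ

/-- The set of eigenvalues of the reduced Laplacian `L_{m-1}`. -/
def eigenvals (m : ℕ) : Set ℝ :=
  {μ | Module.End.HasEigenvalue (Matrix.toLin' (X.Lap m)) μ}

/-- The spectrum of the reduced Laplacian `L_{m-1}` as a multiset (roots of the
characteristic polynomial with multiplicity). -/
noncomputable def spec (m : ℕ) : Multiset ℝ := (X.Lap m).charpoly.roots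

/-- The set of degrees of faces with `m` vertices. -/
def degSet (m : ℕ) : Set ℕ := {N | ∃ σ ∈ X.faces, σ.card = m ∧ X.deg σ = N}

/-- All missing faces of `X` have dimension at most `d` (at most `d + 1` vertices). -/
def MissingBnd (d : ℕ) : Prop :=
  ∀ σ : Finset V, σ ∉ X.faces → (∀ τ ⊂ σ, τ ∈ X.faces) → σ.card ≤ d + 1

/-- `X` is a clique (flag) complex: any set of pairwise connected vertices is a face. -/
def Flag : Prop :=
  ∀ σ : Finset V, (∀ u ∈ σ, ∀ v ∈ σ, ({u, v} : Finset V) ∈ X.faces) → σ ∈ X.faces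

/-- `φ` is a coboundary (an element of the image of the coboundary map). -/
def IsCobound : (m : ℕ) → (X.face m → ℝ) → Prop
  | 0, φ => φ = 0
  | m + 1, φ => ∃ ψ : X.face m → ℝ, (X.CB m).mulVec ψ = φ

/-- The reduced cohomology with real coefficients vanishes in dimension `m - 1`:
every cocycle is a coboundary. -/
def Hvanish (m : ℕ) : Prop :=
  ∀ φ : X.face m → ℝ, (X.CB m).mulVec φ = 0 → X.IsCobound m φ

end SC

/-!
Gershgorin's circle theorem applied to the reduced Laplacian. The diagonal entry at a
face `τ` is `deg τ + |τ|`. An off-diagonal entry at `(τ, τ')` is `0` or `±1`, and it vanishes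
unless `τ'` shares all but one vertex with `τ` and `τ ∪ τ'` is not a face: when `τ ∪ τ'` is a
face, the up and down contributions cancel. Such a `τ'` is `τ + v - u` where `v` is one of the
`n - |τ| - deg τ` vertices for which `τ + v` is not a face, and `u` lies in a minimal non-face
of `τ + v`; that non-face contains `v` and has at most `d + 1` vertices, so there are at most
`d` choices of `u`. Hence the Gershgorin radius at `τ` is at most `d (n - |τ| - deg τ)`.
-/

namespace Finset

variable {α : Type*} [DecidableEq α] {ρ s t σ : Finset α}

theorem covBy_iff_subset_and_card : s ⋖ t ↔ s ⊆ t ∧ #s + 1 = #t :=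
  covBy_iff_exists_insert.trans exists_eq_insert_iff

theorem eq_union_of_covBy (hs : s ⋖ σ) (ht : t ⊆ σ) (hcard : #s = #t) (hne : s ≠ t) :
    σ = s ∪ t := by
  rcases hs.eq_or_eq subset_union_left (union_subset hs.le ht) with h | h
  · exact absurd (eq_of_subset_of_card_le (union_eq_left.1 h) hcard.le).symm hne
  · exact h.symm

theorem eq_inter_of_covBy (hs : ρ ⋖ s) (ht : ρ ⊆ t) (hcard : #s = #t) (hne : s ≠ t) :
    ρ = s ∩ t := by
  rcases hs.eq_or_eq (subset_inter hs.le ht) inter_subset_left with h | h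
  · exact h.symm
  · exact absurd (eq_of_subset_of_card_le (inter_eq_left.1 h) hcard.ge) hne

theorem exists_eq_insert_of_card_inter (hcard : #s = #t) (h : #(s ∩ t) + 1 = #s) :
    ∃ ρ a b, a ∉ ρ ∧ b ∉ ρ ∧ a ≠ b ∧ s = insert a ρ ∧ t = insert b ρ := by
  obtain ⟨a, ha, hs⟩ := exists_eq_insert_iff.2 ⟨inter_subset_left, h⟩
  obtain ⟨b, hb, ht⟩ := exists_eq_insert_iff.2 ⟨inter_subset_right, hcard ▸ h⟩
  refine ⟨s ∩ t, a, b, ha, hb, ?_, hs.symm, ht.symm⟩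
  rintro rfl
  exact ha (mem_inter.2 ⟨hs ▸ mem_insert_self a _, ht ▸ mem_insert_self a _⟩)

end Finset

namespace SC

open Finset Matrix

section Sign

variable {V : Type} [DecidableEq V] [LinearOrder V]

theorem sgn_insert {u : V} {s : Finset V} (hu : u ∉ s) :
    sgn (insert u s) s = (-1) ^ #{w ∈ s | w < u} := by
  rw [sgn, insert_sdiff_cancel hu, sum_singleton, filter_insert, if_neg (lt_irrefl u)]

theorem abs_sgn_of_covBy {σ τ : Finset V} (h : τ ⋖ σ) : |sgn σ τ| = 1 := by
  obtain ⟨u, hu, rfl⟩ := h.exists_finset_insert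
  rw [sgn_insert hu, abs_pow, abs_neg, abs_one, one_pow]

theorem sgn_mul_self_of_covBy {σ τ : Finset V} (h : τ ⋖ σ) : sgn σ τ * sgn σ τ = 1 := by
  rw [← abs_mul_abs_self, abs_sgn_of_covBy h, one_mul]

/-- The two routes from `ρ` up to `ρ ∪ {a, b}` carry opposite signs (this is `d ∘ d = 0`). -/
theorem sgn_mul_sgn_add_sgn_mul_sgn {a b : V} {ρ : Finset V} (hab : a ≠ b) (ha : a ∉ ρ)
    (hb : b ∉ ρ) :
    sgn (insert a (insert b ρ)) (insert a ρ) * sgn (insert a (insert b ρ)) (insert b ρ)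
      + sgn (insert a ρ) ρ * sgn (insert b ρ) ρ = 0 := by
  wlog hlt : a < b generalizing a b
  · have := this hab.symm hb ha (hab.symm.lt_of_le (not_lt.1 hlt))
    rw [insert_comm b a ρ] at this
    linear_combination this
  rw [sgn_insert (s := insert b ρ) (by simp [hab, ha]), insert_comm a b ρ,
    sgn_insert (by simp [hab.symm, hb]), sgn_insert ha, sgn_insert hb, filter_insert,
    if_pos hlt, filter_insert, if_neg hlt.not_gt, card_insert_of_notMem (by simp [ha]), pow_succ]
  ring

end Sign

section Complex

variable {V : Type} [DecidableEq V] (X : SC V)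

/-- `ν \ {u}` can only be a face if `u` lies in a minimal non-face contained in `ν`. -/
theorem card_filter_erase_mem_le {d : ℕ} (hmiss : X.MissingBnd d) {ν : Finset V}
    (hν : ν ∉ X.faces) : #{u ∈ ν | ν.erase u ∈ X.faces} ≤ d + 1 := by
  obtain ⟨η, hην, hmin⟩ := exists_minimal_le_of_wellFoundedLT (· ∉ X.faces) ν hν
  have hsub : {u ∈ ν | ν.erase u ∈ X.faces} ⊆ η := fun u hu => by
    by_contra huη
    exact hmin.prop (X.down_closed _ (mem_filter.1 hu).2 η (subset_erase.2 ⟨hην, huη⟩))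
  exact (card_le_card hsub).trans
    (hmiss η hmin.prop fun τ hτ => not_not.1 (hmin.not_prop_of_lt hτ))

theorem card_filter_erase_insert_mem_le {d : ℕ} (hmiss : X.MissingBnd d) {τ : Finset V}
    (hτ : τ ∈ X.faces) {v : V} (hv : v ∉ τ) (hvτ : insert v τ ∉ X.faces) :
    #{u ∈ τ | (insert v τ).erase u ∈ X.faces} ≤ d := by
  have := X.card_filter_erase_mem_le hmiss hvτ
  rwa [filter_insert, erase_insert hv, if_pos hτ,
    card_insert_of_notMem fun h => hv (mem_filter.1 h).1, add_le_add_iff_right] at this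

/-- `τ` and `τ'` are lower but not upper adjacent. -/
def OuterAdj (τ τ' : Finset V) : Prop :=
  #(τ ∩ τ') + 1 = #τ ∧ τ ∪ τ' ∉ X.faces

instance : DecidableRel X.OuterAdj := fun _ _ => inferInstanceAs (Decidable (_ ∧ _))

variable [Fintype V]

def nonLinkVerts (τ : Finset V) : Finset V := {v ∈ τᶜ | insert v τ ∉ X.faces}

theorem deg_eq_card_filter (τ : Finset V) : X.deg τ = #{v ∈ τᶜ | insert v τ ∈ X.faces} := by
  rw [deg, ← card_image_of_injOn fun v hv w _ h =>
    (insert_inj (mem_compl.1 (mem_filter.1 hv).1)).1 h]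
  congr 1
  ext η
  simp only [mem_filter, mem_image, mem_compl]
  constructor
  · rintro ⟨hη, hsub, hcard⟩
    obtain ⟨v, hv, rfl⟩ := exists_eq_insert_iff.2 ⟨hsub, hcard.symm⟩
    exact ⟨v, ⟨hv, hη⟩, rfl⟩
  · rintro ⟨v, ⟨hv, hη⟩, rfl⟩
    exact ⟨hη, subset_insert v τ, card_insert_of_notMem hv⟩

theorem deg_add_card_nonLinkVerts (τ : Finset V) :
    X.deg τ + #(X.nonLinkVerts τ) = Fintype.card V - #τ := by
  rw [deg_eq_card_filter, nonLinkVerts, card_filter_add_card_filter_not, card_compl]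

theorem card_filter_face {m : ℕ} (p : Finset V → Prop) [DecidablePred p] :
    #{σ : X.face m | p σ.1} = #{σ ∈ X.faces | #σ = m ∧ p σ} := by
  refine card_bij (fun σ _ => σ.1) (fun σ hσ => ?_) (fun _ _ _ _ => Subtype.ext) fun η hη => ?_
  · exact mem_filter.2 ⟨σ.2.1, σ.2.2, (mem_filter.1 hσ).2⟩
  · obtain ⟨hη, hcard, hp⟩ := mem_filter.1 hη
    exact ⟨⟨η, hη, hcard⟩, mem_filter.2 ⟨mem_univ _, hp⟩, rfl⟩

theorem sum_ite_val_eq (k : ℕ) (s : Finset V) (f : Finset V → ℝ) :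
    ∑ σ : X.face k, (if σ.1 = s then f σ.1 else 0) = if s ∈ X.faces ∧ #s = k then f s else 0 := by
  split_ifs with h
  · rw [Fintype.sum_eq_single ⟨s, h⟩ fun σ hσ => if_neg fun e => hσ (Subtype.ext e), if_pos rfl]
  · exact sum_eq_zero fun σ _ => if_neg fun e => h (by rw [← e]; exact σ.2)

theorem card_filter_outerAdj_le {d m : ℕ} (hmiss : X.MissingBnd d) (τ : X.face m) :
    #{τ' : X.face m | X.OuterAdj τ.1 τ'.1} ≤ d * #(X.nonLinkVerts τ.1) := by
  let exchanges (v : V) := {u ∈ τ.1 | (insert v τ.1).erase u ∈ X.faces}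
  calc #{τ' : X.face m | X.OuterAdj τ.1 τ'.1}
      ≤ #((X.nonLinkVerts τ.1).biUnion fun v =>
          (exchanges v).image fun u => (insert v τ.1).erase u) :=
        card_le_card_of_injOn Subtype.val ?_ Subtype.val_injective.injOn
    _ ≤ ∑ v ∈ X.nonLinkVerts τ.1, #(exchanges v) :=
        card_biUnion_le.trans (sum_le_sum fun _ _ => card_image_le)
    _ ≤ ∑ _v ∈ X.nonLinkVerts τ.1, d := sum_le_sum fun v hv => by
        simp only [nonLinkVerts, mem_filter, mem_compl] at hv
        exact X.card_filter_erase_insert_mem_le hmiss τ.2.1 hv.1 hv.2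
    _ = d * #(X.nonLinkVerts τ.1) := by rw [sum_const, smul_eq_mul, mul_comm]
  intro τ' hτ'
  obtain ⟨hI, hU⟩ := (mem_filter.1 hτ').2
  obtain ⟨ρ, a, b, ha, hb, hab, hτ, hτ'⟩ :=
    exists_eq_insert_of_card_inter (τ.2.2.trans τ'.2.2.symm) hI
  have haτ : a ∈ τ.1 := hτ ▸ mem_insert_self a ρ
  have hbτ : b ∉ τ.1 := by rw [hτ]; grind
  have hUb : τ.1 ∪ τ'.1 = insert b τ.1 := by rw [hτ, hτ']; grind
  have hτ'ab : (insert b τ.1).erase a = τ'.1 := by rw [hτ, hτ']; grind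
  rw [mem_coe, mem_biUnion]
  exact ⟨b, mem_filter.2 ⟨mem_compl.2 hbτ, hUb ▸ hU⟩,
    mem_image.2 ⟨a, mem_filter.2 ⟨haτ, hτ'ab ▸ τ'.2.1⟩, hτ'ab⟩⟩

end Complex

section Laplacian

variable {V : Type} [Fintype V] [DecidableEq V] [LinearOrder V] (X : SC V) {m : ℕ}

omit [Fintype V] in
theorem CB_apply_mul_self (σ : X.face (m + 1)) (τ : X.face m) :
    X.CB m σ τ * X.CB m σ τ = if τ.1 ⊆ σ.1 then 1 else 0 := by
  unfold CB
  split_ifs with h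
  · exact sgn_mul_self_of_covBy (covBy_iff_subset_and_card.2 ⟨h, by rw [τ.2.2, σ.2.2]⟩)
  · exact zero_mul 0

theorem CB_transpose_mul_CB_apply_self (τ : X.face m) :
    ((X.CB m)ᵀ * X.CB m) τ τ = X.deg τ.1 := by
  simp only [mul_apply, transpose_apply, CB_apply_mul_self, sum_boole]
  rw [card_filter_face X (τ.1 ⊆ ·), deg, τ.2.2]
  simp only [and_comm]

theorem CB_mul_CB_transpose_apply_self (τ : X.face (m + 1)) :
    (X.CB m * (X.CB m)ᵀ) τ τ = m + 1 := by
  simp only [mul_apply, transpose_apply, CB_apply_mul_self, sum_boole]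
  rw [card_filter_face X (· ⊆ τ.1)]
  have : {ρ ∈ X.faces | #ρ = m ∧ ρ ⊆ τ.1} = τ.1.powersetCard m := by
    ext ρ
    simp only [mem_filter, mem_powersetCard]
    exact ⟨fun h => ⟨h.2.2, h.2.1⟩, fun h => ⟨X.down_closed _ τ.2.1 ρ h.1, h.2, h.1⟩⟩
  rw [this, card_powersetCard, τ.2.2, Nat.choose_succ_self_right]
  push_cast
  ring

theorem lap_apply_self (τ : X.face m) : X.Lap m τ τ = X.deg τ.1 + m := by
  cases m with
  | zero => rw [Lap, CB_transpose_mul_CB_apply_self, Nat.cast_zero, add_zero]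
  | succ m =>
    rw [Lap, Matrix.add_apply, CB_transpose_mul_CB_apply_self, CB_mul_CB_transpose_apply_self]
    push_cast
    ring

theorem CB_transpose_mul_CB_apply_of_ne {τ τ' : X.face m} (hne : τ ≠ τ') :
    ((X.CB m)ᵀ * X.CB m) τ τ' =
      if τ.1 ∪ τ'.1 ∈ X.faces ∧ #(τ.1 ∪ τ'.1) = m + 1 then
        sgn (τ.1 ∪ τ'.1) τ.1 * sgn (τ.1 ∪ τ'.1) τ'.1 else 0 := by
  rw [mul_apply, ← sum_ite_val_eq X (m + 1) _ fun σ => sgn σ τ.1 * sgn σ τ'.1]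
  refine sum_congr rfl fun σ _ => ?_
  simp only [transpose_apply, CB]
  by_cases h : σ.1 = τ.1 ∪ τ'.1
  · rw [if_pos h, if_pos (h ▸ subset_union_left), if_pos (h ▸ subset_union_right), h]
  · rw [if_neg h]
    split_ifs with h₁ h₂
    · exact absurd (eq_union_of_covBy (covBy_iff_subset_and_card.2 ⟨h₁, by rw [τ.2.2, σ.2.2]⟩)
        h₂ (τ.2.2.trans τ'.2.2.symm) (Subtype.val_injective.ne hne)) h
    all_goals ring

theorem CB_mul_CB_transpose_apply_of_ne {τ τ' : X.face (m + 1)} (hne : τ ≠ τ') :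
    (X.CB m * (X.CB m)ᵀ) τ τ' =
      if #(τ.1 ∩ τ'.1) = m then sgn τ.1 (τ.1 ∩ τ'.1) * sgn τ'.1 (τ.1 ∩ τ'.1) else 0 := by
  have hI : τ.1 ∩ τ'.1 ∈ X.faces := X.down_closed _ τ.2.1 _ inter_subset_left
  rw [← if_congr (and_iff_right (b := #(τ.1 ∩ τ'.1) = m) hI) rfl rfl, mul_apply,
    ← sum_ite_val_eq X m _ fun ρ => sgn τ.1 ρ * sgn τ'.1 ρ]
  refine sum_congr rfl fun ρ _ => ?_
  simp only [transpose_apply, CB]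
  by_cases h : ρ.1 = τ.1 ∩ τ'.1
  · rw [if_pos h, if_pos (h ▸ inter_subset_left), if_pos (h ▸ inter_subset_right), h]
  · rw [if_neg h]
    split_ifs with h₁ h₂
    · exact absurd (eq_inter_of_covBy (covBy_iff_subset_and_card.2 ⟨h₁, by rw [τ.2.2, ρ.2.2]⟩)
        h₂ (τ.2.2.trans τ'.2.2.symm) (Subtype.val_injective.ne hne)) h
    all_goals ring

theorem abs_lap_apply_le {τ τ' : X.face m} (hne : τ ≠ τ') :
    |X.Lap m τ τ'| ≤ if X.OuterAdj τ.1 τ'.1 then 1 else 0 := by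
  cases m with
  | zero =>
    exact absurd (Subtype.ext ((card_eq_zero.1 τ.2.2).trans (card_eq_zero.1 τ'.2.2).symm)) hne
  | succ m =>
    rw [Lap, Matrix.add_apply, CB_transpose_mul_CB_apply_of_ne X hne,
      CB_mul_CB_transpose_apply_of_ne X hne]
    have hcards := card_union_add_card_inter τ.1 τ'.1
    rw [τ.2.2, τ'.2.2] at hcards
    by_cases hI : #(τ.1 ∩ τ'.1) = m
    · obtain ⟨ρ, a, b, ha, hb, hab, hτ, hτ'⟩ :=
        exists_eq_insert_of_card_inter (τ.2.2.trans τ'.2.2.symm) (by rw [hI, τ.2.2])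
      have hU : τ.1 ∪ τ'.1 = insert a (insert b ρ) := by rw [hτ, hτ']; grind
      have hI' : τ.1 ∩ τ'.1 = ρ := by rw [hτ, hτ']; grind
      have hUcard : #(τ.1 ∪ τ'.1) = m + 2 := by omega
      simp only [OuterAdj, hUcard, τ.2.2, hI, true_and, and_true, ↓reduceIte]
      rw [hU, hI', hτ, hτ']
      by_cases hF : insert a (insert b ρ) ∈ X.faces
      · rw [if_pos hF, sgn_mul_sgn_add_sgn_mul_sgn hab ha hb, abs_zero, if_neg (not_not_intro hF)]
      · rw [if_neg hF, if_pos hF, zero_add, abs_mul, abs_sgn_of_covBy (covBy_insert ha),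
          abs_sgn_of_covBy (covBy_insert hb), mul_one]
    · have hU : #(τ.1 ∪ τ'.1) ≠ m + 2 := by omega
      rw [if_neg fun h => hU h.2, if_neg hI, add_zero, abs_zero]
      positivity

theorem sum_norm_lap_apply_le {d : ℕ} (hmiss : X.MissingBnd d) (τ : X.face m) :
    ∑ τ' ∈ univ.erase τ, ‖X.Lap m τ τ'‖ ≤ d * #(X.nonLinkVerts τ.1) :=
  calc ∑ τ' ∈ univ.erase τ, ‖X.Lap m τ τ'‖
      ≤ ∑ τ' ∈ univ.erase τ, if X.OuterAdj τ.1 τ'.1 then (1 : ℝ) else 0 :=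
        sum_le_sum fun τ' hτ' =>
          (Real.norm_eq_abs _).trans_le (X.abs_lap_apply_le (ne_of_mem_erase hτ').symm)
    _ ≤ ∑ τ' : X.face m, if X.OuterAdj τ.1 τ'.1 then (1 : ℝ) else 0 :=
        sum_le_sum_of_subset_of_nonneg (subset_univ _) fun _ _ _ => by positivity
    _ = ((#{τ' : X.face m | X.OuterAdj τ.1 τ'.1} : ℕ) : ℝ) := sum_boole _ _
    _ ≤ d * #(X.nonLinkVerts τ.1) := by exact_mod_cast X.card_filter_outerAdj_le hmiss τ

end Laplacian

end SC

theorem spectral_gap_lower_bound_general {V : Type} [Fintype V] [DecidableEq V] [LinearOrder V]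
    (X : SC V) (d : ℕ) (hmiss : X.MissingBnd d)
    (m δ : ℕ) (hδ : IsLeast (X.degSet m) δ) (μ : ℝ) (hμ : μ ∈ X.eigenvals m) :
    ((d : ℝ) + 1) * ((δ : ℝ) + m) - (d : ℝ) * (Fintype.card V : ℝ) ≤ μ := by
  obtain ⟨τ, hτ⟩ := eigenvalue_mem_ball hμ
  have hgersh : X.Lap m τ τ - μ ≤ d * (X.nonLinkVerts τ.1).card := calc
    X.Lap m τ τ - μ ≤ |μ - X.Lap m τ τ| := abs_sub_comm μ _ ▸ le_abs_self _
    _ = dist μ (X.Lap m τ τ) := (Real.dist_eq _ _).symm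
    _ ≤ ∑ τ' ∈ Finset.univ.erase τ, ‖X.Lap m τ τ'‖ := Metric.mem_closedBall.1 hτ
    _ ≤ d * (X.nonLinkVerts τ.1).card := X.sum_norm_lap_apply_le hmiss τ
  have hcount : (X.deg τ.1 : ℝ) + (X.nonLinkVerts τ.1).card = Fintype.card V - m := by
    have h := X.deg_add_card_nonLinkVerts τ.1
    rw [τ.2.2] at h
    rw [← Nat.cast_sub (τ.2.2 ▸ Finset.card_le_univ τ.1), ← h, Nat.cast_add]
  have hδτ : (δ : ℝ) ≤ X.deg τ.1 := by exact_mod_cast hδ.2 ⟨τ.1, τ.2.1, τ.2.2, rfl⟩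
  rw [X.lap_apply_self] at hgersh
  nlinarith [mul_le_mul_of_nonneg_left hδτ (by positivity : (0 : ℝ) ≤ d + 1)]

/-- For a simplicial complex `X` on a vertex set of size `n` all of
whose missing faces have dimension at most `d`, every eigenvalue `μ` of the reduced
`k`-Laplacian (`k = m - 1 ≥ -1`) satisfies `μ ≥ (d+1)(δ_k + k + 1) - d·n`. -/
theorem spectral_gap_lower_bound {V : Type} [Fintype V] [DecidableEq V] [LinearOrder V]
    (X : SC V) (hvert : ∀ v : V, {v} ∈ X.faces) (d : ℕ) (hmiss : X.MissingBnd d)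
    (m δ : ℕ) (hδ : IsLeast (X.degSet m) δ) (μ : ℝ) (hμ : μ ∈ X.eigenvals m) :
    ((d : ℝ) + 1) * ((δ : ℝ) + m) - (d : ℝ) * (Fintype.card V : ℝ) ≤ μ :=
  spectral_gap_lower_bound_general X d hmiss m δ hδ μ hμ
end

section
/- Let X be a simplicial complex on n vertices all of whose missing faces have dimension at most d. Then the reduced k-th cohomology of X with real coefficients vanishes for every k > (d/(d+1))·n − 1. -/
open Matrix BigOperators

/-!
Cochains are real functions on all finsets of vertices, with the coboundary
`(δ f) σ = ∑ u ∈ σ, (-1) ^ #{w ∈ σ | w < u} * f (σ.erase u)`; on the full simplex `δ ∘ δ = 0` and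
the cone contraction hold identically, and a down-closed family of faces is acyclic on faces with
`m` vertices when every function `δ`-closed on its `(m + 1)`-faces is some `δ g` on its `m`-faces.

Induct on a vertex set `W` carrying a down-closed family `F` with `d * #W < m * (d + 1)`. If some
missing face `τ` has at least two vertices, no face contains `τ`, so `F` is covered by the
deletions `F - v`, `v ∈ τ`, whose intersections are the deletions `F - S`, `S ⊆ τ`. Each `F - S`
lives on `W \ S` and has no missing face with more than `d + 1` vertices, so by induction it is
acyclic on faces with `m + 1 - #S` vertices, because `#S ≤ #τ ≤ d + 1`; Mayer–Vietoris over the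
cover gives acyclicity of `F`. If all missing faces have at most one vertex, `F` is a cone over any
of its vertices, or has no vertices at all.
-/

namespace SC

open Finset

section Signs

variable {V : Type} [LinearOrder V]

def orderSign (σ : Finset V) (u : V) : ℝ := (-1) ^ #{w ∈ σ | w < u}

lemma orderSign_mul_self (σ : Finset V) (u : V) : orderSign σ u * orderSign σ u = 1 := by
  rw [orderSign, ← pow_add, ← two_mul, pow_mul, neg_one_sq, one_pow]

variable [DecidableEq V]

lemma orderSign_insert {σ : Finset V} {c : V} (hc : c ∉ σ) (u : V) :
    orderSign (insert c σ) u = if c < u then -orderSign σ u else orderSign σ u := by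
  unfold orderSign
  rw [filter_insert]
  split_ifs
  · rw [card_insert_of_notMem fun h => hc (mem_filter.1 h).1, pow_succ, mul_neg_one]
  · rfl

lemma orderSign_erase {σ : Finset V} {v : V} (hv : v ∈ σ) (u : V) :
    orderSign (σ.erase v) u = if v < u then -orderSign σ u else orderSign σ u := by
  have h := orderSign_insert (notMem_erase v σ) u
  rw [insert_erase hv] at h
  split_ifs at h ⊢ <;> simp [h]

lemma orderSign_mul_orderSign_erase {σ : Finset V} {u v : V} (hu : u ∈ σ) (hv : v ∈ σ)
    (huv : u ≠ v) :
    orderSign σ v * orderSign (σ.erase v) u = -(orderSign σ u * orderSign (σ.erase u) v) := by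
  rw [orderSign_erase hv, orderSign_erase hu]
  rcases huv.lt_or_gt with h | h <;> simp [h, h.not_gt] <;> ring

lemma orderSign_mul_orderSign_insert {σ : Finset V} {u c : V} (hu : u ∈ σ) (hc : c ∉ σ) :
    orderSign σ u * orderSign (σ.erase u) c = -(orderSign σ c * orderSign (insert c σ) u) := by
  rw [orderSign_erase hu, orderSign_insert hc]
  rcases (ne_of_mem_of_not_mem hu hc).lt_or_gt with h | h <;> simp [h, h.not_gt] <;> ring

end Signs

section Coboundary

variable {V : Type} [DecidableEq V] [LinearOrder V]

def coboundary (f : Finset V → ℝ) (σ : Finset V) : ℝ :=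
  ∑ u ∈ σ, orderSign σ u * f (σ.erase u)

lemma coboundary_congr {f g : Finset V → ℝ} {σ : Finset V}
    (h : ∀ u ∈ σ, f (σ.erase u) = g (σ.erase u)) : coboundary f σ = coboundary g σ :=
  sum_congr rfl fun u hu => by rw [h u hu]

lemma coboundary_add (f g : Finset V → ℝ) : coboundary (f + g) = coboundary f + coboundary g := by
  ext σ
  simp only [coboundary, Pi.add_apply, mul_add, sum_add_distrib]

lemma coboundary_sub (f g : Finset V → ℝ) : coboundary (f - g) = coboundary f - coboundary g := by
  ext σ
  simp only [coboundary, Pi.sub_apply, mul_sub, sum_sub_distrib]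

lemma sum_sum_erase_eq_zero {α : Type*} [DecidableEq α] {s : Finset α} (F : α → α → ℝ)
    (hF : ∀ u ∈ s, ∀ v ∈ s, u ≠ v → F u v = -F v u) : ∑ u ∈ s, ∑ v ∈ s.erase u, F u v = 0 := by
  have hswap : ∑ u ∈ s, ∑ v ∈ s.erase u, F u v = ∑ v ∈ s, ∑ u ∈ s.erase v, F u v :=
    sum_comm' fun u v => by simp only [mem_erase]; tauto
  have hneg : ∑ v ∈ s, ∑ u ∈ s.erase v, F u v = -∑ v ∈ s, ∑ u ∈ s.erase v, F v u := by
    rw [← sum_neg_distrib]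
    refine sum_congr rfl fun v hv => ?_
    rw [← sum_neg_distrib]
    exact sum_congr rfl fun u hu => hF u (mem_of_mem_erase hu) v hv (ne_of_mem_erase hu)
  linarith

@[simp]
lemma coboundary_coboundary (f : Finset V → ℝ) : coboundary (coboundary f) = 0 := by
  ext σ
  simp only [coboundary, mul_sum, Pi.zero_apply, ← mul_assoc]
  refine sum_sum_erase_eq_zero _ fun v hv u hu hvu => ?_
  rw [orderSign_mul_orderSign_erase hu hv hvu.symm, erase_right_comm]
  ring

def coneOp (c : V) (f : Finset V → ℝ) (τ : Finset V) : ℝ :=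
  if c ∈ τ then 0 else orderSign τ c * f (insert c τ)

lemma coboundary_coneOp_add_coneOp_coboundary (c : V) (f : Finset V → ℝ) (σ : Finset V) :
    coboundary (coneOp c f) σ + coneOp c (coboundary f) σ = f σ := by
  by_cases hc : c ∈ σ
  · have hterm : ∀ u ∈ σ, u ≠ c → orderSign σ u * coneOp c f (σ.erase u) = 0 := fun u _ hu => by
      rw [coneOp, if_pos (mem_erase.2 ⟨hu.symm, hc⟩), mul_zero]
    rw [coneOp, if_pos hc, add_zero, coboundary, sum_eq_single_of_mem c hc hterm, coneOp,
      if_neg (notMem_erase c σ), insert_erase hc, orderSign_erase hc, if_neg (lt_irrefl c),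
      ← mul_assoc, orderSign_mul_self, one_mul]
  · have hterm : ∀ u ∈ σ, orderSign σ u * coneOp c f (σ.erase u) +
        orderSign σ c * (orderSign (insert c σ) u * f ((insert c σ).erase u)) = 0 :=
      fun u hu => by
        rw [coneOp, if_neg fun h => hc (mem_of_mem_erase h),
          erase_insert_of_ne (ne_of_mem_of_not_mem hu hc).symm, ← mul_assoc, ← mul_assoc,
          orderSign_mul_orderSign_insert hu hc]
        ring
    rw [coneOp, if_neg hc, coboundary, coboundary, sum_insert hc, erase_insert hc,
      orderSign_insert hc, if_neg (lt_irrefl c), mul_add, ← mul_assoc, orderSign_mul_self,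
      one_mul, mul_sum, add_left_comm, ← sum_add_distrib, sum_eq_zero hterm, add_zero]

end Coboundary

section Exactness

variable {V : Type} [LinearOrder V] [DecidableEq V]

/-- Only the values of `f` and `g` on `F` matter. For `m = 0` the conclusion says `f ∅ = 0`
(when `∅ ∈ F`), since `coboundary g ∅ = 0`. -/
def ExactAt (F : Set (Finset V)) (m : ℕ) : Prop :=
  ∀ f : Finset V → ℝ, (∀ σ ∈ F, #σ = m + 1 → coboundary f σ = 0) →
    ∃ g : Finset V → ℝ, ∀ σ ∈ F, #σ = m → coboundary g σ = f σ

lemma exactAt_of_insert_mem {F : Set (Finset V)} {c : V} (hc : ∀ σ ∈ F, insert c σ ∈ F)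
    (m : ℕ) : ExactAt F m := by
  intro f hf
  refine ⟨coneOp c f, fun σ hσ hσm => ?_⟩
  have hcone : coneOp c (coboundary f) σ = 0 := by
    unfold coneOp
    split_ifs with hcσ
    · rfl
    · rw [hf _ (hc σ hσ) (by rw [card_insert_of_notMem hcσ, hσm]), mul_zero]
  linarith [coboundary_coneOp_add_coneOp_coboundary c f σ]

lemma exactAt_union {A B : Set (Finset V)} (hA : IsLowerSet A) (hB : IsLowerSet B) {k : ℕ}
    (hAk : ExactAt A (k + 1)) (hBk : ExactAt B (k + 1)) (hABk : ExactAt (A ∩ B) k) :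
    ExactAt (A ∪ B) (k + 1) := by
  classical
  intro f hf
  obtain ⟨α, hα⟩ := hAk f fun σ hσ => hf σ (Or.inl hσ)
  obtain ⟨β, hβ⟩ := hBk f fun σ hσ => hf σ (Or.inr hσ)
  obtain ⟨γ, hγ⟩ := hABk (α - β) fun σ hσ hσk => by
    rw [coboundary_sub, Pi.sub_apply, hα σ hσ.1 hσk, hβ σ hσ.2 hσk, sub_self]
  -- `β + δγ` is again a primitive of `f` on `B`, and it agrees with `α` on `A ∩ B`
  have hβ' : ∀ ρ ∈ A ∩ B, #ρ = k → (β + coboundary γ) ρ = α ρ := fun ρ hρ hρk => by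
    rw [Pi.add_apply, hγ ρ hρ hρk, Pi.sub_apply, add_sub_cancel]
  refine ⟨fun ρ => if ρ ∈ A then α ρ else (β + coboundary γ) ρ, fun σ hσ hσk => ?_⟩
  have hfacet : ∀ u ∈ σ, #(σ.erase u) = k := fun u hu => by
    rw [card_erase_of_mem hu, hσk, Nat.add_sub_cancel]
  by_cases hσA : σ ∈ A
  · rw [← hα σ hσA hσk]
    exact coboundary_congr fun u _ => if_pos (hA (erase_subset u σ) hσA)
  · have hσB : σ ∈ B := hσ.resolve_left hσA
    calc _ = coboundary (β + coboundary γ) σ := coboundary_congr fun u hu => by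
            split_ifs with hρA
            · exact (hβ' _ ⟨hρA, hB (erase_subset u σ) hσB⟩ (hfacet u hu)).symm
            · rfl
      _ = f σ := by
            rw [coboundary_add, coboundary_coboundary, add_zero, hβ σ hσB hσk]

end Exactness

section Deletion

variable {V : Type}

def delVertices (F : Set (Finset V)) (S : Finset V) : Set (Finset V) := {σ ∈ F | Disjoint σ S}

def delFace (F : Set (Finset V)) (L : Finset V) : Set (Finset V) := {σ ∈ F | ¬L ⊆ σ}

variable {F : Set (Finset V)}

lemma isLowerSet_delVertices (hF : IsLowerSet F) (S : Finset V) :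
    IsLowerSet (delVertices F S) :=
  fun _ _ hba ha => ⟨hF hba ha.1, ha.2.mono_left hba⟩

lemma isLowerSet_delFace (hF : IsLowerSet F) (L : Finset V) : IsLowerSet (delFace F L) :=
  fun _ _ hba ha => ⟨hF hba ha.1, fun h => ha.2 (h.trans hba)⟩

lemma delFace_eq_self (hF : IsLowerSet F) {L : Finset V} (hL : L ∉ F) : delFace F L = F :=
  Set.sep_eq_self_iff_mem_true.2 fun _ hσ hLσ => hL (hF hLσ hσ)

lemma delVertices_inter_delFace (S L : Finset V) :
    delVertices F S ∩ delFace F L = delFace (delVertices F S) L := by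
  ext σ
  simp only [delFace, delVertices, Set.mem_inter_iff, Set.mem_ofPred_eq]
  tauto

lemma delFace_singleton (u : V) : delFace F {u} = delVertices F {u} := by
  ext σ
  simp only [delFace, delVertices, Set.mem_ofPred_eq, singleton_subset_iff,
    disjoint_singleton_right]

variable [DecidableEq V]

lemma delVertices_delVertices (S T : Finset V) :
    delVertices (delVertices F S) T = delVertices F (S ∪ T) := by
  ext σ
  simp only [delVertices, Set.mem_ofPred_eq, disjoint_union_right, and_assoc]

lemma delFace_insert (u : V) (L : Finset V) :
    delFace F (insert u L) = delVertices F {u} ∪ delFace F L := by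
  ext σ
  simp only [delFace, delVertices, Set.mem_union, Set.mem_ofPred_eq, insert_subset_iff,
    disjoint_singleton_right]
  tauto

end Deletion

section MissingFaces

variable {V : Type} {F : Set (Finset V)}

lemma singleton_mem_of_minimal_notMem {τ : Finset V} (hτ : Minimal (· ∉ F) τ) (hτ2 : 2 ≤ #τ)
    {v : V} (hv : v ∈ τ) : {v} ∈ F :=
  not_not.1 <| hτ.not_prop_of_lt <|
    (singleton_subset_iff.2 hv).ssubset_of_ne fun h => by rw [← h, card_singleton] at hτ2; omega

lemma card_le_of_minimal_notMem_delVertices {d : ℕ}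
    (hmiss : ∀ τ, Minimal (· ∉ F) τ → #τ ≤ d + 1) (S : Finset V) :
    ∀ τ, Minimal (· ∉ delVertices F S) τ → #τ ≤ d + 1 := by
  intro τ hτ
  by_cases hτS : Disjoint τ S
  · rw [minimal_iff_forall_lt] at hτ
    exact hmiss τ (minimal_iff_forall_lt.2
      ⟨fun h => hτ.1 ⟨h, hτS⟩, fun ρ hρ hρF => hτ.2 hρ fun h => hρF h.1⟩)
  · obtain ⟨v, hvτ, hvS⟩ := not_disjoint_iff.1 hτS
    by_contra hlt
    exact disjoint_singleton_left.1
      (singleton_mem_of_minimal_notMem hτ (by omega) hvτ).2 hvS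

variable [DecidableEq V]

lemma insert_mem_of_minimal_notMem_card_le_one (hF : IsLowerSet F)
    (hmiss : ∀ τ, Minimal (· ∉ F) τ → #τ ≤ 1) {c : V} (hc : {c} ∈ F) {σ : Finset V}
    (hσ : σ ∈ F) : insert c σ ∈ F := by
  by_contra hnot
  obtain ⟨τ, hτσ, hτ⟩ := exists_minimal_le_of_wellFoundedLT (· ∉ F) _ hnot
  apply hτ.prop
  rcases τ.eq_empty_or_nonempty with rfl | ⟨w, hw⟩
  · exact hF (empty_subset σ) hσ
  have hτw : τ ⊆ {w} := fun x hx => mem_singleton.2 (card_le_one.1 (hmiss τ hτ) x hx w hw)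
  rcases mem_insert.1 (hτσ hw) with rfl | hwσ
  · exact hF hτw hc
  · exact hF (hτw.trans (singleton_subset_iff.2 hwσ)) hσ

end MissingFaces

section Vanishing

variable {V : Type} [LinearOrder V] [DecidableEq V] {F : Set (Finset V)}

/-- Mayer–Vietoris for the cover of `delFace F L` by the vertex deletions `delVertices F {u}`,
`u ∈ L`, whose `j`-fold intersections are the deletions of `j`-subsets of `L`. -/
lemma exactAt_delFace (hF : IsLowerSet F) {L : Finset V} (hL : L.Nonempty)
    {k : ℕ} (hk : #L ≤ k)
    (h : ∀ S ⊆ L, S.Nonempty → ExactAt (delVertices F S) (k + 1 - #S)) :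
    ExactAt (delFace F L) k := by
  induction L using Finset.induction_on generalizing F k with
  | empty => exact absurd hL not_nonempty_empty
  | insert u L hu ih =>
    rcases L.eq_empty_or_nonempty with rfl | hL
    · simpa [delFace_singleton] using h {u} subset_rfl (singleton_nonempty u)
    rw [card_insert_of_notMem hu] at hk
    obtain ⟨k, rfl⟩ : ∃ k', k = k' + 1 := ⟨k - 1, by have := hL.card_pos; omega⟩
    rw [delFace_insert]
    refine exactAt_union (isLowerSet_delVertices hF _) (isLowerSet_delFace hF _) ?_ ?_ ?_
    · simpa using h {u} (singleton_subset_iff.2 (mem_insert_self u L)) (singleton_nonempty u)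
    · exact ih hF hL (by omega) fun S hS hSne => h S (hS.trans (subset_insert u L)) hSne
    · rw [delVertices_inter_delFace]
      refine ih (isLowerSet_delVertices hF _) hL (by omega) fun S hS hSne => ?_
      have huS : u ∉ S := fun huS => hu (hS huS)
      have := h (insert u S) (insert_subset_insert u hS) (insert_nonempty u S)
      rwa [card_insert_of_notMem huS, insert_eq, ← delVertices_delVertices,
        show k + 1 + 1 - (#S + 1) = k + 1 - #S by omega] at this

lemma exactAt_of_minimal_notMem_card_le_one (hF : IsLowerSet F)
    (hmiss : ∀ τ, Minimal (· ∉ F) τ → #τ ≤ 1) {m : ℕ} (hm : 0 < m) : ExactAt F m := by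
  by_cases hvert : ∃ c, {c} ∈ F
  · obtain ⟨c, hc⟩ := hvert
    exact exactAt_of_insert_mem
      (fun _ hσ => insert_mem_of_minimal_notMem_card_le_one hF hmiss hc hσ) m
  · refine fun f _ => ⟨0, fun σ hσ hσm => ?_⟩
    obtain ⟨v, hv⟩ := card_pos.1 (hσm ▸ hm)
    exact (hvert ⟨v, hF (singleton_subset_iff.2 hv) hσ⟩).elim

theorem exactAt_of_card_minimal_notMem_le {d : ℕ} (W : Finset V) {m : ℕ} (hF : IsLowerSet F)
    (hW : ∀ σ ∈ F, σ ⊆ W) (hmiss : ∀ τ, Minimal (· ∉ F) τ → #τ ≤ d + 1)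
    (hm : d * #W < m * (d + 1)) : ExactAt F m := by
  induction W using Finset.strongInduction generalizing F m with
  | H W ih =>
  by_cases hbig : ∃ τ, Minimal (· ∉ F) τ ∧ 2 ≤ #τ
  · obtain ⟨τ, hτ, hτ2⟩ := hbig
    have hτW : τ ⊆ W := fun v hv =>
      hW {v} (singleton_mem_of_minimal_notMem hτ hτ2 hv) (mem_singleton_self v)
    have hτd := hmiss τ hτ
    have hτm : #τ ≤ m := by have := card_le_card hτW; nlinarith
    rw [← delFace_eq_self hF hτ.prop]
    refine exactAt_delFace hF (card_pos.1 (by omega)) hτm fun S hS hSne => ?_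
    have hSW := hS.trans hτW
    refine ih (W \ S) (sdiff_ssubset hSW hSne) (isLowerSet_delVertices hF S)
      (fun σ hσ => subset_sdiff.2 ⟨hW σ hσ.1, hσ.2⟩)
      (card_le_of_minimal_notMem_delVertices hmiss S) ?_
    -- removing `#S ≤ d + 1` vertices lowers `d * #W` by `d * #S ≥ (#S - 1) * (d + 1)`
    have hSτ := card_le_card hS
    have hSW' := card_le_card hSW
    rw [card_sdiff_of_subset hSW]
    obtain ⟨w, hw⟩ := Nat.exists_eq_add_of_le hSW'
    obtain ⟨k, hk⟩ := Nat.exists_eq_add_of_le (hSτ.trans hτm)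
    rw [hw, show m + 1 - #S = k + 1 by omega, Nat.add_sub_cancel_left]
    rw [hw, hk] at hm
    nlinarith
  · push Not at hbig
    exact exactAt_of_minimal_notMem_card_le_one hF (fun τ hτ => by have := hbig τ hτ; omega)
      (Nat.pos_of_ne_zero fun h => by rw [h, zero_mul] at hm; omega)

end Vanishing

section Complexes

variable {V : Type} [DecidableEq V]

lemma isLowerSet_faces (X : SC V) : IsLowerSet (X.faces : Set (Finset V)) :=
  fun _ _ hba ha => X.down_closed _ ha _ hba

lemma MissingBnd.card_le {X : SC V} {d : ℕ} (h : X.MissingBnd d) (τ : Finset V)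
    (hτ : Minimal (· ∉ (X.faces : Set (Finset V))) τ) : #τ ≤ d + 1 :=
  h τ hτ.prop fun _ hρ => not_not.1 (hτ.not_prop_of_lt hρ)

lemma image_erase_eq_filter (X : SC V) {s : Finset V} (hs : s ∈ X.faces) {m : ℕ}
    (hsm : #s = m + 1) : s.image s.erase = {ρ ∈ X.faces | #ρ = m ∧ ρ ⊆ s} := by
  ext ρ
  simp only [mem_filter, mem_image]
  constructor
  · rintro ⟨u, hu, rfl⟩
    refine ⟨X.down_closed s hs _ (erase_subset u s), ?_, erase_subset u s⟩
    rw [card_erase_of_mem hu, hsm, Nat.add_sub_cancel]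
  · rintro ⟨-, hρm, hρs⟩
    obtain ⟨u, hu, rfl⟩ := exists_eq_insert_iff.2 ⟨hρs, by rw [hρm, hsm]⟩
    exact ⟨u, mem_insert_self u ρ, erase_insert hu⟩

variable [Fintype V] [LinearOrder V]

lemma CB_mulVec_comp_val (X : SC V) (m : ℕ) (f : Finset V → ℝ) :
    X.CB m *ᵥ (fun τ => f τ.1) = fun σ => coboundary f σ.1 := by
  ext ⟨s, hs, hsm⟩
  calc (X.CB m *ᵥ fun τ => f τ.1) ⟨s, hs, hsm⟩
      = ∑ ρ ∈ X.faces with #ρ = m, if ρ ⊆ s then sgn s ρ * f ρ else 0 := by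
        simp only [mulVec, dotProduct, CB, ite_mul, zero_mul]
        exact (sum_subtype _ (fun ρ => mem_filter) fun ρ => if ρ ⊆ s then sgn s ρ * f ρ else 0).symm
    _ = ∑ ρ ∈ s.image s.erase, sgn s ρ * f ρ := by
        rw [image_erase_eq_filter X hs hsm, ← filter_filter]
        exact (sum_filter _ _).symm
    _ = coboundary f s := by
        rw [sum_image (erase_injOn s)]
        exact sum_congr rfl fun u hu => by rw [sgn, sdiff_erase_self hu, sum_singleton]; rfl

lemma hvanish_of_exactAt {X : SC V} {m : ℕ} (h : ExactAt (X.faces : Set (Finset V)) m) :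
    X.Hvanish m := by
  intro φ hφ
  obtain ⟨f, rfl⟩ : ∃ f : Finset V → ℝ, φ = fun τ => f τ.1 :=
    ⟨Function.extend Subtype.val φ 0,
      funext fun τ => (Subtype.val_injective.extend_apply _ _ _).symm⟩
  rw [CB_mulVec_comp_val] at hφ
  obtain ⟨g, hg⟩ := h f fun σ hσ hσm => congrFun hφ ⟨σ, hσ, hσm⟩
  cases m with
  | zero =>
    funext τ
    rw [← hg τ.1 τ.2.1 τ.2.2, card_eq_zero.1 τ.2.2]
    rfl
  | succ m =>
    exact ⟨fun τ => g τ.1, by rw [CB_mulVec_comp_val]; exact funext fun σ => hg σ.1 σ.2.1 σ.2.2⟩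

end Complexes

end SC

theorem cohomology_vanishing_general {V : Type} [Fintype V] [DecidableEq V] [LinearOrder V]
    (X : SC V) (d : ℕ) (hmiss : X.MissingBnd d)
    (m : ℕ) (hm : (m : ℝ) - 1 > (d : ℝ) / ((d : ℝ) + 1) * (Fintype.card V : ℝ) - 1) :
    X.Hvanish m := by
  have hcard : d * Finset.card (Finset.univ : Finset V) < m * (d + 1) := by
    rw [gt_iff_lt, sub_lt_sub_iff_right, div_mul_eq_mul_div, div_lt_iff₀ (by positivity)] at hm
    rw [Finset.card_univ]
    exact_mod_cast hm
  exact SC.hvanish_of_exactAt <| SC.exactAt_of_card_minimal_notMem_le Finset.univ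
    X.isLowerSet_faces (fun σ _ => Finset.subset_univ σ) hmiss.card_le hcard

/-- If all missing faces of `X` have dimension at most `d`, the reduced
`k`-th cohomology with real coefficients vanishes for every `k > (d/(d+1))·n - 1`
(here `k = m - 1 ≥ -1`). -/
theorem cohomology_vanishing {V : Type} [Fintype V] [DecidableEq V] [LinearOrder V]
    (X : SC V) (hvert : ∀ v : V, {v} ∈ X.faces) (d : ℕ) (hmiss : X.MissingBnd d)
    (m : ℕ) (hm : (m : ℝ) - 1 > (d : ℝ) / ((d : ℝ) + 1) * (Fintype.card V : ℝ) - 1) :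
    X.Hvanish m :=
  cohomology_vanishing_general X d hmiss m hm
end

section
/- Let X be a simplicial complex with all missing faces of dimension at most d, σ ∈ X(k), and v a vertex not in σ with v ∉ lk(X,σ). Then the number of (k−1)-dimensional faces τ of σ such that v ∈ lk(X,τ) is at most d. -/
open Matrix BigOperators

/-!
Take a minimal non-face `T ⊆ σ ∪ {v}`; it has at most `d + 1` vertices. It contains `v`,
since `σ` is a face, and it contains every `u ∈ σ` with `v · (σ ∖ u)` a face, since otherwise
it would lie in that face. So the vertices counted are among the at most `d` vertices of `T ∖ {v}`.
-/

namespace SC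

variable {V : Type} [DecidableEq V] (X : SC V)

theorem exists_minimal_nonface_subset {ρ : Finset V} (hρ : ρ ∉ X.faces) :
    ∃ T ⊆ ρ, T ∉ X.faces ∧ ∀ τ ⊂ T, τ ∈ X.faces := by
  obtain ⟨T, hTρ, hT⟩ := exists_minimal_le_of_wellFoundedLT (· ∉ X.faces) ρ hρ
  exact ⟨T, hTρ, hT.prop, fun τ hτ => by_contra fun hτT => hT.not_lt hτT hτ⟩

theorem MissingBnd.exists_nonface_subset_card_le {X : SC V} {d : ℕ} (hmiss : X.MissingBnd d)
    {ρ : Finset V} (hρ : ρ ∉ X.faces) : ∃ T ⊆ ρ, T ∉ X.faces ∧ T.card ≤ d + 1 := by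
  obtain ⟨T, hTρ, hT, hmin⟩ := X.exists_minimal_nonface_subset hρ
  exact ⟨T, hTρ, hT, hmiss T hT hmin⟩

theorem mem_of_nonface_subset_insert {T ρ : Finset V} {u : V} (hρ : ρ ∈ X.faces)
    (hT : T ∉ X.faces) (hTρ : T ⊆ insert u ρ) : u ∈ T :=
  by_contra fun hu => hT <| X.down_closed ρ hρ T <| (Finset.subset_insert_iff_of_notMem hu).1 hTρ

end SC

theorem link_faces_bound_general {V : Type} [DecidableEq V]
    (X : SC V) (d : ℕ) (hmiss : X.MissingBnd d)
    (σ : Finset V) (hσ : σ ∈ X.faces)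
    (v : V) (hv : v ∉ σ) (hlk : insert v σ ∉ X.faces) :
    (σ.filter fun u => insert v (σ.erase u) ∈ X.faces).card ≤ d := by
  obtain ⟨T, hTσ, hT, hTcard⟩ := hmiss.exists_nonface_subset_card_le hlk
  have hvT : v ∈ T := X.mem_of_nonface_subset_insert hσ hT hTσ
  have hsub : (σ.filter fun u => insert v (σ.erase u) ∈ X.faces) ⊆ T.erase v := by
    intro u hu
    obtain ⟨huσ, hface⟩ := Finset.mem_filter.1 hu
    refine Finset.mem_erase.2
      ⟨ne_of_mem_of_not_mem huσ hv, X.mem_of_nonface_subset_insert hface hT ?_⟩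
    rw [Finset.insert_comm, Finset.insert_erase huσ]
    exact hTσ
  calc (σ.filter fun u => insert v (σ.erase u) ∈ X.faces).card
      ≤ (T.erase v).card := Finset.card_le_card hsub
    _ = T.card - 1 := Finset.card_erase_of_mem hvT
    _ ≤ d := by omega

/-- If all missing faces of `X` have dimension at most `d`, `σ` is a
`k`-simplex, and `v ∉ σ` with `v ∉ lk(X,σ)`, then the number of `(k-1)`-faces `τ` of `σ`
with `v ∈ lk(X,τ)` is at most `d`. -/
theorem link_faces_bound {V : Type} [Fintype V] [DecidableEq V] [LinearOrder V]
    (X : SC V) (d : ℕ) (hmiss : X.MissingBnd d)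
    (k : ℕ) (σ : Finset V) (hσ : σ ∈ X.faces) (hcard : σ.card = k + 1)
    (v : V) (hv : v ∉ σ) (hlk : insert v σ ∉ X.faces) :
    (σ.filter fun u => insert v (σ.erase u) ∈ X.faces).card ≤ d :=
  link_faces_bound_general X d hmiss σ hσ v hv hlk
end

section
/- Let Z = (Δ_d^{(d−1)})^{∗t} ∗ Δ_{r−1}, with n = (d+1)t + r vertices. Then the minimal degree of a k-simplex of Z is δ_k(Z) = n − (k+1) − ⌊(k+1)/d⌋ for −1 ≤ k ≤ dt − 1, and δ_k(Z) = n − (k+1) − t for dt ≤ k ≤ dt + r − 1. -/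
open Matrix BigOperators

section
open Classical

/-- The complex `Z = (Δ_d^{(d-1)})^{∗t} ∗ Δ_{r-1}`: on vertex set
`(Fin t × Fin (d+1)) ⊕ Fin r`, a set is a face iff it misses at least one vertex from
each of the `t` copies of the vertex set of `Δ_d` (no condition on the `Fin r` part). -/
noncomputable def Zcx (d t r : ℕ) : SC ((Fin t × Fin (d + 1)) ⊕ Fin r) where
  faces := Finset.univ.filter fun σ =>
    ∀ i : Fin t,
      (σ.filter fun v => Sum.elim (fun p => p.1 = i) (fun _ => False) v).card ≤ d
  empty_mem := by
    simp only [Finset.mem_filter, Finset.mem_univ, true_and]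
    intro i
    simp
  down_closed := by
    intro σ hσ τ hτ
    simp only [Finset.mem_filter, Finset.mem_univ, true_and] at hσ ⊢
    intro i
    exact le_trans (Finset.card_le_card (Finset.filter_subset_filter _ hτ)) (hσ i)

end

noncomputable instance (d t r : ℕ) : LinearOrder ((Fin t × Fin (d + 1)) ⊕ Fin r) :=
  LinearOrder.lift' (Fintype.equivFin _) (Equiv.injective _)

/-!
A vertex `v ∉ σ` extends a face `σ` of `Z` unless `σ ∪ {v}` contains a whole copy of the vertex
set of `Δ_d`, i.e. unless `σ` already has `d` vertices in the copy of `v`. Each such *full* copy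
blocks exactly its one missing vertex, so `deg σ = n - |σ| - f(σ)` with `f(σ)` the number of full
copies. The copies are disjoint, hence `f(σ) ≤ min(t, ⌊|σ|/d⌋)`, and filling the copies greedily,
`d` vertices at a time, before the free vertices attains this bound for every `|σ| ≤ dt + r`.
-/

open Finset

lemma SC.deg_eq_card_filter_insert_mem {V : Type} [Fintype V] [DecidableEq V] (X : SC V)
    (σ : Finset V) : X.deg σ = #{v ∈ univ \ σ | insert v σ ∈ X.faces} := by
  have hcofaces : {η ∈ X.faces | σ ⊆ η ∧ #η = #σ + 1}
      = {v ∈ univ \ σ | insert v σ ∈ X.faces}.image (insert · σ) := by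
    ext η
    simp only [mem_filter, mem_image, mem_sdiff, mem_univ, true_and, @eq_comm _ #η]
    constructor
    · rintro ⟨hη, hsub⟩
      obtain ⟨v, hv, rfl⟩ := exists_eq_insert_iff.2 hsub
      exact ⟨v, ⟨hv, hη⟩, rfl⟩
    · rintro ⟨v, ⟨hv, hη⟩, rfl⟩
      exact ⟨hη, exists_eq_insert_iff.1 ⟨v, hv, rfl⟩⟩
  rw [SC.deg, hcofaces, card_image_of_injOn]
  intro a ha b _ hab
  simp only [coe_filter, mem_sdiff, mem_univ, true_and, Set.mem_ofPred_eq] at ha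
  exact (insert_inj ha.1).1 hab

section Zcx
open Classical

variable {d t r : ℕ}

abbrev ZVert (d t r : ℕ) := (Fin t × Fin (d + 1)) ⊕ Fin r

def InCopy (i : Fin t) : ZVert d t r → Prop :=
  Sum.elim (fun p => p.1 = i) (fun _ => False)

lemma InCopy.unique {i j : Fin t} {v : ZVert d t r} (hi : InCopy i v) (hj : InCopy j v) :
    i = j := by
  cases v with
  | inl p => exact (hi : p.1 = i) ▸ (hj : p.1 = j)
  | inr x => exact hi.elim

noncomputable def numInCopy (σ : Finset (ZVert d t r)) (i : Fin t) : ℕ :=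
  #{v ∈ σ | InCopy i v}

noncomputable def fullCopies (σ : Finset (ZVert d t r)) : Finset (Fin t) :=
  {i | numInCopy σ i = d}

lemma mem_fullCopies {σ : Finset (ZVert d t r)} {i : Fin t} :
    i ∈ fullCopies σ ↔ numInCopy σ i = d := by
  simp [fullCopies]

lemma mem_Zcx_faces {σ : Finset (ZVert d t r)} :
    σ ∈ (Zcx d t r).faces ↔ ∀ i, numInCopy σ i ≤ d := by
  simp only [Zcx, mem_filter, mem_univ, true_and]
  rfl

lemma numInCopy_insert {σ : Finset (ZVert d t r)} {v : ZVert d t r} (hv : v ∉ σ) (i : Fin t) :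
    numInCopy (insert v σ) i = numInCopy σ i + if InCopy i v then 1 else 0 := by
  rw [numInCopy, numInCopy, filter_insert]
  split_ifs
  · exact card_insert_of_notMem fun h => hv (mem_of_mem_filter _ h)
  · rfl

lemma insert_notMem_Zcx_faces_iff {σ : Finset (ZVert d t r)} (hσ : σ ∈ (Zcx d t r).faces)
    {v : ZVert d t r} (hv : v ∉ σ) :
    insert v σ ∉ (Zcx d t r).faces ↔ ∃ i ∈ fullCopies σ, InCopy i v := by
  have hle := mem_Zcx_faces.1 hσ
  simp only [mem_Zcx_faces, numInCopy_insert hv, mem_fullCopies]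
  push Not
  refine exists_congr fun i => ?_
  have := hle i
  split_ifs with h <;> simp [h] <;> omega

lemma numInCopy_eq_card_filter (σ : Finset (ZVert d t r)) (i : Fin t) :
    numInCopy σ i = #{j : Fin (d + 1) | Sum.inl (i, j) ∈ σ} := by
  have : {v ∈ σ | InCopy i v}
      = (univ.filter fun j : Fin (d + 1) => Sum.inl (i, j) ∈ σ).map
          ⟨fun j => Sum.inl (i, j), fun a b h => by simpa using h⟩ := by
    ext v
    simp only [mem_filter, mem_univ, true_and, mem_map]
    cases v with
    | inl p =>
      refine ⟨fun ⟨hp, h⟩ => ⟨p.2, by rw [← show p.1 = i from h]; exact ⟨hp, rfl⟩⟩, ?_⟩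
      rintro ⟨j, hj, hji⟩
      cases hji
      exact ⟨hj, rfl⟩
    | inr x => simp [InCopy]
  rw [numInCopy, this, card_map]

lemma numInCopy_univ (i : Fin t) : numInCopy (univ : Finset (ZVert d t r)) i = d + 1 := by
  simp [numInCopy_eq_card_filter]

lemma card_biUnion_filter_inCopy (s : Finset (ZVert d t r)) (I : Finset (Fin t)) :
    #(I.biUnion fun i => {v ∈ s | InCopy i v}) = ∑ i ∈ I, #{v ∈ s | InCopy i v} := by
  refine card_biUnion fun i _ j _ hij => disjoint_left.2 fun v hvi hvj => hij ?_
  exact (mem_filter.1 hvi).2.unique (mem_filter.1 hvj).2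

lemma card_filter_inCopy_compl_of_mem_fullCopies {σ : Finset (ZVert d t r)} {i : Fin t}
    (hi : i ∈ fullCopies σ) : #{v ∈ univ \ σ | InCopy i v} = 1 := by
  have hsplit :
      {v ∈ univ \ σ | InCopy i v} = univ.filter (InCopy i) \ {v ∈ σ | InCopy i v} := by
    ext v
    simp only [mem_filter, mem_sdiff, mem_univ, true_and]
    tauto
  rw [hsplit, card_sdiff_of_subset (filter_subset_filter _ (subset_univ σ)),
    ← numInCopy, ← numInCopy, numInCopy_univ, mem_fullCopies.1 hi, Nat.add_sub_cancel_left]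

lemma deg_Zcx {σ : Finset (ZVert d t r)} (hσ : σ ∈ (Zcx d t r).faces) :
    (Zcx d t r).deg σ = (d + 1) * t + r - #σ - #(fullCopies σ) := by
  have hblocked : {v ∈ univ \ σ | insert v σ ∉ (Zcx d t r).faces}
      = (fullCopies σ).biUnion fun i => {v ∈ univ \ σ | InCopy i v} := by
    ext v
    simp only [mem_filter, mem_biUnion]
    constructor
    · rintro ⟨hv, h⟩
      obtain ⟨i, hi, hvi⟩ := (insert_notMem_Zcx_faces_iff hσ (mem_sdiff.1 hv).2).1 h
      exact ⟨i, hi, hv, hvi⟩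
    · rintro ⟨i, hi, hv, hvi⟩
      exact ⟨hv, (insert_notMem_Zcx_faces_iff hσ (mem_sdiff.1 hv).2).2 ⟨i, hi, hvi⟩⟩
  have hcard_blocked :
      #{v ∈ univ \ σ | insert v σ ∉ (Zcx d t r).faces} = #(fullCopies σ) := by
    rw [hblocked, card_biUnion_filter_inCopy,
      sum_congr rfl fun i hi => card_filter_inCopy_compl_of_mem_fullCopies hi, card_eq_sum_ones]
  have hcompl : #(univ \ σ) = (d + 1) * t + r - #σ := by
    rw [card_sdiff_of_subset (subset_univ σ), card_univ]
    simp [Fintype.card_sum, Fintype.card_prod, mul_comm]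
  rw [SC.deg_eq_card_filter_insert_mem, ← hcompl, ← hcard_blocked,
    ← card_filter_add_card_filter_not (s := univ \ σ) (fun v => insert v σ ∈ (Zcx d t r).faces),
    Nat.add_sub_cancel]

lemma card_fullCopies_mul_le_card (σ : Finset (ZVert d t r)) : #(fullCopies σ) * d ≤ #σ :=
  calc #(fullCopies σ) * d = ∑ i ∈ fullCopies σ, numInCopy σ i := by
        rw [sum_congr rfl fun i hi => mem_fullCopies.1 hi, sum_const, smul_eq_mul]
    _ = #((fullCopies σ).biUnion fun i => {v ∈ σ | InCopy i v}) :=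
        (card_biUnion_filter_inCopy σ _).symm
    _ ≤ #σ := card_le_card (biUnion_subset.2 fun _ _ => filter_subset _ _)

lemma card_fullCopies_le_min (hd : 0 < d) (σ : Finset (ZVert d t r)) :
    #(fullCopies σ) ≤ min t (#σ / d) :=
  le_min ((card_filter_le _ _).trans_eq (card_fin t))
    ((Nat.le_div_iff_mul_le hd).2 (card_fullCopies_mul_le_card σ))

noncomputable def prefixFace (g : Fin t → ℕ) (e : ℕ) : Finset (ZVert d t r) :=
  univ.filter (Sum.elim (fun p => (p.2 : ℕ) < g p.1) (fun x => (x : ℕ) < e))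

lemma numInCopy_prefixFace (g : Fin t → ℕ) (e : ℕ) (i : Fin t) :
    numInCopy (prefixFace (d := d) (r := r) g e) i = min (d + 1) (g i) := by
  simp [numInCopy_eq_card_filter, prefixFace, Fin.card_filter_val_lt]

lemma card_eq_sum_numInCopy_add (σ : Finset (ZVert d t r)) :
    #σ = ∑ i, numInCopy σ i + #{x : Fin r | Sum.inr x ∈ σ} := by
  conv_lhs => rw [← filter_univ_mem σ, card_filter, Fintype.sum_sum_type, Fintype.sum_prod_type]
  simp only [numInCopy_eq_card_filter, card_filter]

lemma card_prefixFace (g : Fin t → ℕ) (e : ℕ) :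
    #(prefixFace (d := d) (r := r) g e) = ∑ i, min (d + 1) (g i) + min r e := by
  rw [card_eq_sum_numInCopy_add]
  simp only [numInCopy_prefixFace]
  simp [prefixFace, Fin.card_filter_val_lt]

lemma prefixFace_mem_Zcx_faces {g : Fin t → ℕ} (hg : ∀ i, g i ≤ d) (e : ℕ) :
    prefixFace g e ∈ (Zcx d t r).faces :=
  mem_Zcx_faces.2 fun i =>
    (numInCopy_prefixFace g e i).trans_le ((min_le_right _ _).trans (hg i))

lemma sum_range_min_sub_mul (d m t : ℕ) :
    ∑ i ∈ range t, min d (m - d * i) = min m (d * t) := by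
  induction t with
  | zero => simp
  | succ t ih => rw [sum_range_succ, ih, mul_add_one]; omega

lemma exists_face_card_eq_card_fullCopies_eq (hd : 0 < d) {m : ℕ} (hm : m ≤ d * t + r) :
    ∃ σ ∈ (Zcx d t r).faces, #σ = m ∧ #(fullCopies σ) = min t (m / d) := by
  -- Greedy filling: copies `0, 1, …` receive `d` vertices each until `m` runs out, and the
  -- remaining `m - d * t` vertices go to the free part `Fin r`.
  set g : Fin t → ℕ := fun i => min d (m - d * i)
  have hg : ∀ i, g i ≤ d := fun i => min_le_left _ _
  have hnum : ∀ i, numInCopy (prefixFace (d := d) (r := r) g (m - d * t)) i = g i := fun i => by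
    rw [numInCopy_prefixFace]; exact min_eq_right ((hg i).trans d.le_succ)
  refine ⟨prefixFace g (m - d * t), prefixFace_mem_Zcx_faces hg _, ?_, ?_⟩
  · rw [card_prefixFace, min_eq_right (by omega : m - d * t ≤ r),
      sum_congr rfl fun i _ => min_eq_right ((hg i).trans d.le_succ),
      Fin.sum_univ_eq_sum_range (fun i => min d (m - d * i)), sum_range_min_sub_mul]
    omega
  · have hfull : fullCopies (prefixFace (d := d) (r := r) g (m - d * t))
        = ({i : Fin t | (i : ℕ) < m / d} : Finset (Fin t)) := by
      ext i
      rw [mem_fullCopies, hnum, mem_filter, Nat.lt_iff_add_one_le, Nat.le_div_iff_mul_le hd,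
        add_one_mul, mul_comm]
      simp only [g, mem_univ, true_and]
      omega
    rw [hfull, Fin.card_filter_val_lt]

theorem isLeast_degSet_Zcx (hd : 0 < d) {m : ℕ} (hm : m ≤ d * t + r) :
    IsLeast ((Zcx d t r).degSet m) ((d + 1) * t + r - m - min t (m / d)) := by
  obtain ⟨σ, hσ, hcard, hfull⟩ := exists_face_card_eq_card_fullCopies_eq hd hm
  refine ⟨⟨σ, hσ, hcard, by rw [deg_Zcx hσ, hcard, hfull]⟩, ?_⟩
  rintro _ ⟨τ, hτ, rfl, rfl⟩
  rw [deg_Zcx hτ]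
  exact Nat.sub_le_sub_left (card_fullCopies_le_min hd τ) _

end Zcx

/-- Here `m = k + 1` is the number of vertices of a `k`-simplex. -/
theorem Zcx_min_degree (d t r : ℕ) (hd : 0 < d) (m : ℕ) :
    (m ≤ d * t →
      IsLeast ((Zcx d t r).degSet m) ((d + 1) * t + r - m - m / d))
    ∧ (d * t + 1 ≤ m → m ≤ d * t + r →
      IsLeast ((Zcx d t r).degSet m) ((d + 1) * t + r - m - t)) := by
  refine ⟨fun hm => ?_, fun hm hm' => ?_⟩
  · have hdiv : m / d ≤ t := Nat.div_le_of_le_mul hm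
    simpa [min_eq_right hdiv] using
      isLeast_degSet_Zcx (r := r) hd (hm.trans (Nat.le_add_right _ _))
  · have hdiv : t ≤ m / d := (Nat.le_div_iff_mul_le hd).2 (by rw [mul_comm]; omega)
    simpa [min_eq_left hdiv] using isLeast_degSet_Zcx hd hm'
end

section
/- Let X be a clique complex on a vertex set V of size n such that μ_k(X) = 2(k+1) − n for some k. Then X is isomorphic to (Δ_1^{(0)})^{∗(n−k−1)} ∗ Δ_{2(k+1)−n−1}; in particular dim(X) = k. -/
open Matrix BigOperators

/-!
Let `φ` be an eigenvector of `L_{m-1}(X)` for the eigenvalue `2m - n`. The Laplacian of the full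
simplex on `V` is `n • 1`; restricting to `X` removes exactly the cofaces that are not faces, so
`L_{m-1}(X) = n • 1 - Bᵀ B` with `B` the coboundary matrix from the `m`-vertex faces to the
`(m+1)`-vertex non-faces, and `‖B φ‖² = 2 (n - m) ‖φ‖²`. In a clique complex every non-face `η`
contains a missing edge, so at most two facets of `η` are faces; Cauchy–Schwarz and a double count
give `‖B φ‖² ≤ 2 (n - m) ‖φ‖²`. In the equality case, for `σ` in the support of `φ` and `w ∉ σ`,
`σ ∪ {w}` is a non-face, `w` has a unique non-neighbour `u ∈ σ`, and `σ - u + w` is again in the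
support, with the opposite normalised sign. Three such swaps around a triangle would be an odd cycle
of sign changes, so distinct vertices outside a fixed `σ₀` in the support have distinct
non-neighbours and are adjacent. Hence the missing edges of `X` form a matching between `V ∖ σ₀`
and part of `σ₀`, which describes `(Δ_1^{(0)})^{∗(n-m)} ∗ Δ_{2m-n-1}`.
-/

open Finset

lemma card_supersets {V : Type} [DecidableEq V] [Fintype V] (σ : Finset V) :
    #{η ∈ univ.powersetCard (#σ + 1) | σ ⊆ η} = Fintype.card V - #σ := by
  rw [← card_univ (α := V), ← card_sdiff_of_subset (subset_univ σ)]
  symm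
  refine card_bij (fun w _ => insert w σ) ?_ ?_ ?_
  · intro w hw
    have hw : w ∉ σ := (mem_sdiff.1 hw).2
    simp [card_insert_of_notMem hw, subset_insert]
  · intro w₁ hw₁ w₂ _ h
    have := h ▸ mem_insert_self w₁ σ
    exact (mem_insert.1 this).resolve_right (mem_sdiff.1 hw₁).2
  · intro η hη
    simp only [mem_filter, mem_powersetCard] at hη
    obtain ⟨w, hw, rfl⟩ := exists_eq_insert_iff.2 ⟨hη.2, hη.1.2.symm⟩
    exact ⟨w, by simpa using hw, rfl⟩

lemma exists_ne_eq_of_sq_sum_eq_two_mul {ι : Type*} [DecidableEq ι] {s : Finset ι} {a : ι → ℝ}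
    (hs : #s ≤ 2) {i : ι} (hi : i ∈ s) (hai : a i ≠ 0)
    (h : (∑ j ∈ s, a j) ^ 2 = 2 * ∑ j ∈ s, a j ^ 2) : ∃ j ∈ s, j ≠ i ∧ a j = a i := by
  obtain ⟨j, hj, hji⟩ : ∃ j ∈ s, j ≠ i := by
    by_contra! hall
    rw [eq_singleton_iff_unique_mem.2 ⟨hi, hall⟩, sum_singleton, sum_singleton] at h
    exact hai (pow_eq_zero_iff two_ne_zero |>.1 (by linarith))
  have hpair : s = {j, i} :=
    (eq_of_subset_of_card_le (insert_subset hj (singleton_subset_iff.2 hi))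
      (hs.trans (card_pair hji).ge)).symm
  rw [hpair, sum_pair hji, sum_pair hji] at h
  exact ⟨j, hj, hji, by nlinarith [sq_nonneg (a j - a i)]⟩

namespace SC

section Signs

variable {V : Type} [LinearOrder V]

def signAt (s : Finset V) (x : V) : ℝ := (-1) ^ #{y ∈ s | y < x}

lemma signAt_mul_self (s : Finset V) (x : V) : signAt s x * signAt s x = 1 := by
  rw [signAt, ← pow_add, Even.neg_one_pow ⟨_, rfl⟩]

lemma signAt_ne_zero (s : Finset V) (x : V) : signAt s x ≠ 0 :=
  left_ne_zero_of_mul_eq_one (signAt_mul_self s x)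

lemma ne_zero_of_signAt_mul_add_eq_zero {ρ : Finset V} {u w : V} {a b : ℝ} (hb : b ≠ 0)
    (h : signAt ρ u * a + signAt ρ w * b = 0) : a ≠ 0 := by
  rintro rfl
  rw [mul_zero, zero_add] at h
  exact hb ((mul_eq_zero.1 h).resolve_left (signAt_ne_zero _ _))

lemma ite_lt_mul_ite_lt {a b : V} (h : a ≠ b) :
    (if a < b then (-1 : ℝ) else 1) * (if b < a then -1 else 1) = -1 := by
  rcases h.lt_or_gt with h | h
  · simp [h, h.not_gt]
  · simp [h, h.not_gt]

lemma ite_lt_mul_self (a b : V) :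
    (if a < b then (-1 : ℝ) else 1) * (if a < b then -1 else 1) = 1 := by
  split_ifs <;> norm_num

end Signs

section Incidence

variable {V : Type} [DecidableEq V] [LinearOrder V]

def incidence (η σ : Finset V) : ℝ := if σ ⊆ η then sgn η σ else 0

lemma signAt_insert {s : Finset V} {y : V} (hy : y ∉ s) (x : V) :
    signAt (insert y s) x = (if y < x then -1 else 1) * signAt s x := by
  unfold signAt
  rw [filter_insert]
  split_ifs with h
  · rw [card_insert_of_notMem (fun h' => hy (mem_filter.1 h').1), pow_succ, mul_comm]
  · rw [one_mul]

lemma signAt_insert_self (s : Finset V) (x : V) : signAt (insert x s) x = signAt s x := by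
  simp [signAt, filter_insert]

lemma sgn_erase {s : Finset V} {x : V} (hx : x ∈ s) : sgn s (s.erase x) = signAt s x := by
  rw [sgn, sdiff_erase_self hx, sum_singleton, signAt]

lemma sgn_insert_s15 {s : Finset V} {x : V} (hx : x ∉ s) : sgn (insert x s) s = signAt s x := by
  have := sgn_erase (mem_insert_self x s)
  rwa [erase_insert hx, signAt_insert_self] at this

lemma incidence_insert {s : Finset V} {x : V} (hx : x ∉ s) :
    incidence (insert x s) s = signAt s x := by
  rw [incidence, if_pos (subset_insert x s), sgn_insert_s15 hx]

lemma incidence_mul_self {η σ : Finset V} (h : #σ + 1 = #η) :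
    incidence η σ * incidence η σ = if σ ⊆ η then 1 else 0 := by
  by_cases hσ : σ ⊆ η
  · obtain ⟨x, hx, rfl⟩ := exists_eq_insert_iff.2 ⟨hσ, h⟩
    rw [incidence_insert hx, signAt_mul_self, if_pos hσ]
  · simp [incidence, hσ]

lemma incidence_union_mul_add_incidence_mul {τ : Finset V} {x y : V} (hx : x ∉ τ) (hy : y ∉ τ)
    (hxy : x ≠ y) :
    incidence (insert x τ ∪ insert y τ) (insert x τ)
        * incidence (insert x τ ∪ insert y τ) (insert y τ)
      + incidence (insert x τ) τ * incidence (insert y τ) τ = 0 := by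
  have hyx : y ∉ insert x τ := by simp [hy, hxy.symm]
  have hxy' : x ∉ insert y τ := by simp [hx, hxy]
  have hu₁ : insert x τ ∪ insert y τ = insert y (insert x τ) := by ext; simp
  have hu₂ : insert x τ ∪ insert y τ = insert x (insert y τ) := by ext; simp; tauto
  rw [hu₁, incidence_insert hyx, ← hu₁, hu₂, incidence_insert hxy', incidence_insert hx,
    incidence_insert hy, signAt_insert hx, signAt_insert hy]
  linear_combination (signAt τ x * signAt τ y) * ite_lt_mul_ite_lt hxy

lemma incidence_mul_incidence_of_not_union_subset {η σ₁ σ₂ : Finset V} (h : ¬σ₁ ∪ σ₂ ⊆ η) :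
    incidence η σ₁ * incidence η σ₂ = 0 := by
  rw [union_subset_iff, not_and_or] at h
  rcases h with h | h <;> simp [incidence, h]

lemma incidence_mul_incidence_of_not_subset_inter {σ₁ σ₂ τ : Finset V} (h : ¬τ ⊆ σ₁ ∩ σ₂) :
    incidence σ₁ τ * incidence σ₂ τ = 0 := by
  rw [subset_inter_iff, not_and_or] at h
  rcases h with h | h <;> simp [incidence, h]

variable [Fintype V]

lemma sum_incidence_mul_self_up (σ : Finset V) :
    ∑ η ∈ univ.powersetCard (#σ + 1), incidence η σ * incidence η σ
      = (Fintype.card V - #σ : ℕ) := by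
  rw [sum_congr rfl fun η hη => incidence_mul_self (mem_powersetCard.1 hη).2.symm, sum_boole,
    card_supersets]

lemma sum_incidence_mul_self_down {k : ℕ} {σ : Finset V} (hσ : #σ = k + 1) :
    ∑ τ ∈ univ.powersetCard k, incidence σ τ * incidence σ τ = #σ := by
  rw [sum_congr rfl fun τ hτ => incidence_mul_self (by rw [(mem_powersetCard.1 hτ).2, hσ]),
    sum_boole]
  have : {τ ∈ (univ : Finset V).powersetCard k | τ ⊆ σ} = σ.powersetCard k := by
    ext τ; simp [mem_powersetCard, and_comm]
  rw [this, card_powersetCard, hσ, Nat.choose_succ_self_right]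

lemma sum_incidence_mul_up_of_ne {k : ℕ} {σ₁ σ₂ : Finset V} (h₁ : #σ₁ = k + 1)
    (h₂ : #σ₂ = k + 1) (hne : σ₁ ≠ σ₂) :
    ∑ η ∈ univ.powersetCard (k + 1 + 1), incidence η σ₁ * incidence η σ₂
      = if #(σ₁ ∪ σ₂) = k + 1 + 1
        then incidence (σ₁ ∪ σ₂) σ₁ * incidence (σ₁ ∪ σ₂) σ₂ else 0 := by
  have hcard : k + 1 + 1 ≤ #(σ₁ ∪ σ₂) := by
    by_contra h
    have e₁ := eq_of_subset_of_card_le (subset_union_left (s₁ := σ₁) (s₂ := σ₂)) (by omega)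
    have e₂ := eq_of_subset_of_card_le (subset_union_right (s₁ := σ₁) (s₂ := σ₂)) (by omega)
    exact hne (e₁.trans e₂.symm)
  split_ifs with h
  · refine sum_eq_single_of_mem _ (by simp [h]) fun η hη hne => ?_
    refine incidence_mul_incidence_of_not_union_subset fun hsub => hne ?_
    exact (eq_of_subset_of_card_le hsub (by rw [h, (mem_powersetCard.1 hη).2])).symm
  · refine sum_eq_zero fun η hη => incidence_mul_incidence_of_not_union_subset fun hsub => h ?_
    have := card_le_card hsub
    rw [(mem_powersetCard.1 hη).2] at this
    omega

lemma sum_incidence_mul_down_of_ne {k : ℕ} {σ₁ σ₂ : Finset V} (h₁ : #σ₁ = k + 1)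
    (h₂ : #σ₂ = k + 1) (hne : σ₁ ≠ σ₂) :
    ∑ τ ∈ univ.powersetCard k, incidence σ₁ τ * incidence σ₂ τ
      = if #(σ₁ ∩ σ₂) = k
        then incidence σ₁ (σ₁ ∩ σ₂) * incidence σ₂ (σ₁ ∩ σ₂) else 0 := by
  have hcard : #(σ₁ ∩ σ₂) ≤ k := by
    by_contra h
    have e₁ := eq_of_subset_of_card_le (inter_subset_left (s₁ := σ₁) (s₂ := σ₂)) (by omega)
    have e₂ := eq_of_subset_of_card_le (inter_subset_right (s₁ := σ₁) (s₂ := σ₂)) (by omega)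
    exact hne (e₁.symm.trans e₂)
  split_ifs with h
  · refine sum_eq_single_of_mem _ (by simp [h]) fun τ hτ hne => ?_
    refine incidence_mul_incidence_of_not_subset_inter fun hsub => hne ?_
    exact eq_of_subset_of_card_le hsub (by rw [h, (mem_powersetCard.1 hτ).2])
  · refine sum_eq_zero fun τ hτ => incidence_mul_incidence_of_not_subset_inter fun hsub => h ?_
    have := card_le_card hsub
    rw [(mem_powersetCard.1 hτ).2] at this
    omega

lemma sum_incidence_mul_up_add_down {k : ℕ} {σ₁ σ₂ : Finset V} (h₁ : #σ₁ = k + 1)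
    (h₂ : #σ₂ = k + 1) :
    ∑ η ∈ univ.powersetCard (k + 1 + 1), incidence η σ₁ * incidence η σ₂
      + ∑ τ ∈ univ.powersetCard k, incidence σ₁ τ * incidence σ₂ τ
      = if σ₁ = σ₂ then (Fintype.card V : ℝ) else 0 := by
  split_ifs with hne
  · subst hne
    have hup := sum_incidence_mul_self_up σ₁
    rw [h₁] at hup
    rw [hup, sum_incidence_mul_self_down h₁, h₁]
    have : k + 1 ≤ Fintype.card V := h₁ ▸ card_le_univ σ₁
    push_cast [Nat.cast_sub this]
    ring
  rw [sum_incidence_mul_up_of_ne h₁ h₂ hne, sum_incidence_mul_down_of_ne h₁ h₂ hne]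
  have hsum := card_union_add_card_inter σ₁ σ₂
  by_cases h : #(σ₁ ∩ σ₂) = k
  · rw [if_pos (by omega), if_pos h]
    obtain ⟨x, hx, hx'⟩ := exists_eq_insert_iff.2 ⟨inter_subset_left, by rw [h, h₁]⟩
    obtain ⟨y, hy, hy'⟩ := exists_eq_insert_iff.2 ⟨inter_subset_right, by rw [h, h₂]⟩
    have hxy : x ≠ y := fun hxy => hne (hx'.symm.trans (by rw [hxy]; exact hy'))
    have := incidence_union_mul_add_incidence_mul hx hy hxy
    rwa [hx', hy'] at this
  · rw [if_neg (by omega), if_neg h, add_zero]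

end Incidence

section Faces

variable {V : Type} [DecidableEq V] {X : SC V}

lemma pair_mem_faces {σ : Finset V} (hσ : σ ∈ X.faces) {u v : V} (hu : u ∈ σ) (hv : v ∈ σ) :
    {u, v} ∈ X.faces :=
  X.down_closed σ hσ _ (insert_subset hu (singleton_subset_iff.2 hv))

lemma Flag.exists_missing_edge (hflag : X.Flag) (hvert : ∀ v : V, {v} ∈ X.faces) {η : Finset V}
    (hη : η ∉ X.faces) : ∃ p ∈ η, ∃ q ∈ η, p ≠ q ∧ {p, q} ∉ X.faces := by
  by_contra! h
  refine hη (hflag η fun u hu v hv => ?_)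
  rcases eq_or_ne u v with rfl | huv
  · simpa using hvert u
  · exact h u hu v hv huv

lemma Flag.pair_notMem_faces (hflag : X.Flag) {η : Finset V} (hη : η ∉ X.faces) {a b : V}
    (hne : a ≠ b) (ha : η.erase a ∈ X.faces) (hb : η.erase b ∈ X.faces) : {a, b} ∉ X.faces := by
  refine fun hab => hη (hflag η fun x hx y hy => ?_)
  by_cases hxya : x ≠ a ∧ y ≠ a
  · exact pair_mem_faces ha (mem_erase.2 ⟨hxya.1, hx⟩) (mem_erase.2 ⟨hxya.2, hy⟩)
  by_cases hxyb : x ≠ b ∧ y ≠ b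
  · exact pair_mem_faces hb (mem_erase.2 ⟨hxyb.1, hx⟩) (mem_erase.2 ⟨hxyb.2, hy⟩)
  refine X.down_closed _ hab _ fun z hz => ?_
  simp only [mem_insert, mem_singleton] at hz ⊢
  grind

lemma eq_of_insert_erase_mem_faces {σ : Finset V} {u w x : V}
    (hτ : insert w (σ.erase u) ∈ X.faces) (hx : x ∈ σ) (hxw : {x, w} ∉ X.faces) : x = u := by
  by_contra h
  exact hxw (pair_mem_faces hτ (mem_insert_of_mem (mem_erase.2 ⟨h, hx⟩)) (mem_insert_self _ _))

end Faces

section Nonfaces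

variable {V : Type} [Fintype V] [DecidableEq V] (X : SC V)

abbrev nonface (m : ℕ) := {η : Finset V // η ∉ X.faces ∧ η.card = m}

def facesIn (m : ℕ) (η : Finset V) : Finset (X.face m) := {σ | σ.1 ⊆ η}

lemma sum_face_add_sum_nonface (j : ℕ) (f : Finset V → ℝ) :
    ∑ σ : X.face j, f σ.1 + ∑ η : X.nonface j, f η.1 = ∑ η ∈ univ.powersetCard j, f η := by
  rw [← sum_filter_add_sum_filter_not _ (· ∈ X.faces),
    sum_subtype (p := fun σ => σ ∈ X.faces ∧ #σ = j) _ (by simp [and_comm]) f,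
    sum_subtype (p := fun η => η ∉ X.faces ∧ #η = j) _ (by simp [and_comm]) f]

lemma sum_face_eq_sum_powersetCard (j : ℕ) (f : Finset V → ℝ) (hf : ∀ η ∉ X.faces, f η = 0) :
    ∑ σ : X.face j, f σ.1 = ∑ η ∈ univ.powersetCard j, f η := by
  rw [← sum_face_add_sum_nonface X j f, left_eq_add]
  exact sum_eq_zero fun η _ => hf η.1 η.2.1

variable {X}

lemma card_facesIn_le_two (hflag : X.Flag) (hvert : ∀ v : V, {v} ∈ X.faces) {m : ℕ}
    (η : X.nonface (m + 1)) : #(X.facesIn m η.1) ≤ 2 := by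
  obtain ⟨p, hp, q, hq, -, hmiss⟩ := hflag.exists_missing_edge hvert η.2.1
  refine (card_le_card_of_injOn Subtype.val (t := {η.1.erase p, η.1.erase q}) (fun σ hσ => ?_)
    Subtype.val_injective.injOn).trans card_le_two
  obtain ⟨z, hz, hzη⟩ := exists_eq_insert_iff.2 ⟨(mem_filter.1 hσ).2, by rw [σ.2.2, η.2.2]⟩
  have hση : σ.1 = η.1.erase z := by rw [← hzη, erase_insert hz]
  have hpq : z = p ∨ z = q := by
    by_contra! hzpq
    refine hmiss (pair_mem_faces σ.2.1 ?_ ?_) <;> rw [hση]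
    exacts [mem_erase.2 ⟨hzpq.1.symm, hp⟩, mem_erase.2 ⟨hzpq.2.symm, hq⟩]
  rcases hpq with rfl | rfl <;> simp [hση]

lemma card_nonface_supersets {m : ℕ} (σ : X.face m) :
    #{η : X.nonface (m + 1) | σ.1 ⊆ η.1} = #{w ∈ σ.1ᶜ | insert w σ.1 ∉ X.faces} := by
  symm
  refine card_bij (fun w hw => ⟨insert w σ.1, (mem_filter.1 hw).2, ?_⟩) ?_ ?_ ?_
  · rw [card_insert_of_notMem (mem_compl.1 (mem_filter.1 hw).1), σ.2.2]
  · intro w _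
    simp [subset_insert]
  · intro w₁ hw₁ w₂ _ h
    have h' : insert w₁ σ.1 = insert w₂ σ.1 := congrArg Subtype.val h
    have hw : w₁ ∈ insert w₂ σ.1 := h' ▸ mem_insert_self w₁ σ.1
    exact (mem_insert.1 hw).resolve_right (mem_compl.1 (mem_filter.1 hw₁).1)
  · intro η hη
    obtain ⟨w, hw, hwη⟩ := exists_eq_insert_iff.2 ⟨(mem_filter.1 hη).2, by rw [σ.2.2, η.2.2]⟩
    exact ⟨w, mem_filter.2 ⟨mem_compl.2 hw, hwη ▸ η.2.1⟩, Subtype.ext hwη⟩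

lemma sum_sum_facesIn {m : ℕ} (f : X.face m → ℝ) :
    ∑ η : X.nonface (m + 1), ∑ σ ∈ X.facesIn m η.1, f σ
      = ∑ σ : X.face m, f σ * #{w ∈ σ.1ᶜ | insert w σ.1 ∉ X.faces} := by
  simp only [facesIn, sum_filter]
  rw [sum_comm]
  refine sum_congr rfl fun σ _ => ?_
  rw [← sum_filter, sum_const, nsmul_eq_mul, card_nonface_supersets, mul_comm]

end Nonfaces

section Matching

variable {V : Type} [Fintype V] [DecidableEq V]

/-- The `#s` disjoint pairs `{x, f x}` are the factors `Δ_1^{(0)}` of the join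
`(Δ_1^{(0)})^{∗#s} ∗ Δ`, and the remaining vertices span its simplex factor `Δ`. -/
structure IsIndepOfMatching (X : SC V) (s : Finset V) (f : V → V) : Prop where
  mapsTo_compl : ∀ x ∈ s, f x ∉ s
  injOn : Set.InjOn f s
  mem_faces_iff : ∀ σ, σ ∈ X.faces ↔ ∀ x ∈ s, ¬(x ∈ σ ∧ f x ∈ σ)

lemma mem_Zcx_one_faces {t r : ℕ} (τ : Finset ((Fin t × Fin 2) ⊕ Fin r)) :
    τ ∈ (Zcx 1 t r).faces ↔ ∀ i, ¬(Sum.inl (i, 0) ∈ τ ∧ Sum.inl (i, 1) ∈ τ) := by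
  simp only [Zcx, mem_filter, mem_univ, true_and]
  refine forall_congr' fun i => ⟨fun h ⟨h₀, h₁⟩ => ?_, fun h => card_le_one.2 ?_⟩
  · have := card_le_one.1 h (Sum.inl (i, 0)) (by simpa using h₀) (Sum.inl (i, 1))
      (by simpa using h₁)
    simp at this
  · rintro (⟨i₁, b₁⟩ | _) hb₁ (⟨i₂, b₂⟩ | _) hb₂ <;> simp only [mem_filter, Sum.elim_inl,
      Sum.elim_inr, and_false] at hb₁ hb₂
    obtain ⟨hb₁, rfl⟩ := hb₁
    obtain ⟨hb₂, rfl⟩ := hb₂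
    fin_cases b₁ <;> fin_cases b₂ <;> simp_all

variable {X : SC V} {s : Finset V} {f : V → V}

lemma IsIndepOfMatching.card_le_card_compl (hX : X.IsIndepOfMatching s f) : #s ≤ #sᶜ :=
  card_le_card_of_injOn f (fun x hx => mem_compl.2 (hX.mapsTo_compl x hx)) hX.injOn

lemma IsIndepOfMatching.card_add_card_le (hX : X.IsIndepOfMatching s f) {σ : Finset V}
    (hσ : σ ∈ X.faces) : #σ + #s ≤ Fintype.card V := by
  have hσ' := (hX.mem_faces_iff σ).1 hσ
  have hle : #σ ≤ #sᶜ := by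
    refine card_le_card_of_injOn (fun x => if x ∈ s then f x else x) (fun x _ => ?_) ?_
    · simp only [mem_coe, mem_compl]
      split_ifs with hx
      exacts [hX.mapsTo_compl x hx, hx]
    · intro x hx y hy hxy
      simp only at hxy
      split_ifs at hxy with hxs hys hys
      · exact hX.injOn hxs hys hxy
      · exact absurd ⟨hx, hxy ▸ hy⟩ (hσ' x hxs)
      · exact absurd ⟨hy, hxy ▸ hx⟩ (hσ' y hys)
      · exact hxy
  rw [card_compl] at hle
  have := card_le_univ s
  omega

lemma IsIndepOfMatching.exists_equiv_Zcx (hX : X.IsIndepOfMatching s f) {t r : ℕ} (ht : #s = t)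
    (hcard : 2 * t + r = Fintype.card V) :
    ∃ e : V ≃ (Fin t × Fin 2) ⊕ Fin r, ∀ σ : Finset V,
      σ ∈ X.faces ↔ σ.image e ∈ (Zcx 1 t r).faces := by
  let a : Fin t ≃ s := (s.equivFinOfCardEq ht).symm
  let p : Fin t × Fin 2 → V := fun q => ![(a q.1 : V), f (a q.1)] q.2
  have hp : Function.Injective p := by
    rintro ⟨i, b⟩ ⟨j, c⟩ h
    fin_cases b <;> fin_cases c <;> simp [p] at h ⊢
    · exact h
    · exact hX.mapsTo_compl _ (a j).2 (h ▸ (a i).2)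
    · exact hX.mapsTo_compl _ (a i).2 (h ▸ (a j).2)
    · exact a.injective (Subtype.ext (hX.injOn (a i).2 (a j).2 h))
  have hcardα : Fintype.card ((Fin t × Fin 2) ⊕ Fin r) = Fintype.card V := by simp; omega
  obtain ⟨g, hg⟩ := Finset.exists_equiv_extend_of_card_eq (t := univ) (s := univ.image Sum.inl)
    (f := Sum.elim p (Fintype.equivOfCardEq hcardα ∘ Sum.inr)) (by rw [card_univ, hcardα])
    (subset_univ _) (by
      simp only [coe_image, coe_univ, Set.image_univ]
      rintro _ ⟨q, rfl⟩ _ ⟨q', rfl⟩ h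
      exact congrArg _ (hp h))
  let e : V ≃ (Fin t × Fin 2) ⊕ Fin r := (g.trans (Equiv.subtypeUnivEquiv mem_univ)).symm
  have he (q : Fin t × Fin 2) (σ : Finset V) : Sum.inl q ∈ σ.image e ↔ p q ∈ σ := by
    have : e.symm (Sum.inl q) = p q := hg _ (mem_image_of_mem _ (mem_univ q))
    simp [← this, ← Equiv.eq_symm_apply]
  refine ⟨e, fun σ => ?_⟩
  rw [hX.mem_faces_iff, mem_Zcx_one_faces]
  simp only [he, p, Matrix.cons_val_zero, Matrix.cons_val_one]
  exact ⟨fun h i => h _ (a i).2, fun h x hx => by simpa using h (a.symm ⟨x, hx⟩)⟩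

end Matching

section Laplacian

variable {V : Type} [Fintype V] [DecidableEq V] [LinearOrder V] (X : SC V)

def missingCB (m : ℕ) : Matrix (X.nonface (m + 1)) (X.face m) ℝ :=
  fun η σ => incidence η.1 σ.1

/-- The full simplex has Laplacian `n • 1` (`sum_incidence_mul_up_add_down`). On `X` the down part
is unchanged, because faces are closed under subsets, while the up part loses exactly the
`(m+1)`-vertex non-faces. -/
lemma lap_eq (m : ℕ) :
    X.Lap m = (Fintype.card V : ℝ) • 1 - (X.missingCB m)ᵀ * X.missingCB m := by
  ext σ₁ σ₂
  have hmissing : ((X.missingCB m)ᵀ * X.missingCB m) σ₁ σ₂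
      = ∑ η : X.nonface (m + 1), incidence η.1 σ₁.1 * incidence η.1 σ₂.1 := rfl
  rw [Matrix.sub_apply, Matrix.smul_apply, one_apply, hmissing, eq_sub_iff_add_eq]
  cases m with
  | zero =>
    have hσ : ∀ σ : X.face 0, σ.1 = ∅ := fun σ => card_eq_zero.1 σ.2.2
    obtain rfl : σ₁ = σ₂ := Subtype.ext ((hσ σ₁).trans (hσ σ₂).symm)
    have hup := sum_incidence_mul_self_up (V := V) ∅
    rw [card_empty, Nat.sub_zero] at hup
    have hlap : X.Lap 0 σ₁ σ₁ = ∑ η : X.face 1, incidence η.1 σ₁.1 * incidence η.1 σ₁.1 := rfl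
    rw [if_pos rfl, smul_eq_mul, mul_one, ← hup, ← sum_face_add_sum_nonface, hlap, hσ σ₁]
  | succ k =>
    have hvanish : ∀ τ ∉ X.faces, incidence σ₁.1 τ * incidence σ₂.1 τ = 0 := fun τ hτ => by
      have : ¬τ ⊆ σ₁.1 := fun h => hτ (X.down_closed _ σ₁.2.1 τ h)
      simp [incidence, this]
    have hlap : X.Lap (k + 1) σ₁ σ₂
        = ∑ η : X.face (k + 1 + 1), incidence η.1 σ₁.1 * incidence η.1 σ₂.1
          + ∑ τ : X.face k, incidence σ₁.1 τ.1 * incidence σ₂.1 τ.1 := rfl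
    have hup := sum_face_add_sum_nonface X (k + 1 + 1) fun η => incidence η σ₁.1 * incidence η σ₂.1
    have hdown := sum_face_eq_sum_powersetCard X k _ hvanish
    have hfull := sum_incidence_mul_up_add_down σ₁.2.2 σ₂.2.2
    rw [hlap, smul_eq_mul]
    split_ifs with h
    · rw [if_pos (congrArg Subtype.val h)] at hfull
      linarith
    · rw [if_neg fun h' => h (Subtype.ext h')] at hfull
      linarith

lemma dotProduct_lap_mulVec (m : ℕ) (φ : X.face m → ℝ) :
    φ ⬝ᵥ (X.Lap m *ᵥ φ) = Fintype.card V * (φ ⬝ᵥ φ)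
      - (X.missingCB m *ᵥ φ) ⬝ᵥ (X.missingCB m *ᵥ φ) := by
  rw [lap_eq, sub_mulVec, smul_mulVec, one_mulVec, ← mulVec_mulVec, dotProduct_sub,
    dotProduct_smul, smul_eq_mul, dotProduct_mulVec, vecMul_transpose]

variable {X}

lemma incidence_sq_of_mem_facesIn {m : ℕ} {η : Finset V} (hη : #η = m + 1) {σ : X.face m}
    (hσ : σ ∈ X.facesIn m η) : incidence η σ.1 ^ 2 = 1 := by
  rw [sq, incidence_mul_self (by rw [σ.2.2, hη]), if_pos (mem_filter.1 hσ).2]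

lemma missingCB_mulVec_apply {m : ℕ} (φ : X.face m → ℝ) (η : X.nonface (m + 1)) :
    (X.missingCB m *ᵥ φ) η = ∑ σ ∈ X.facesIn m η.1, incidence η.1 σ.1 * φ σ := by
  rw [facesIn, sum_filter]
  refine sum_congr rfl fun σ _ => ?_
  split_ifs with h
  · rfl
  · simp [missingCB, incidence, h]

lemma missingCB_mulVec_sq_le (hflag : X.Flag) (hvert : ∀ v : V, {v} ∈ X.faces) {m : ℕ}
    (φ : X.face m → ℝ) (η : X.nonface (m + 1)) :
    (X.missingCB m *ᵥ φ) η ^ 2 ≤ 2 * ∑ σ ∈ X.facesIn m η.1, φ σ ^ 2 := by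
  rw [missingCB_mulVec_apply]
  calc (∑ σ ∈ X.facesIn m η.1, incidence η.1 σ.1 * φ σ) ^ 2
      ≤ #(X.facesIn m η.1) * ∑ σ ∈ X.facesIn m η.1, (incidence η.1 σ.1 * φ σ) ^ 2 :=
        sq_sum_le_card_mul_sum_sq
    _ = #(X.facesIn m η.1) * ∑ σ ∈ X.facesIn m η.1, φ σ ^ 2 := by
        congr 1
        refine sum_congr rfl fun σ hσ => ?_
        rw [mul_pow, incidence_sq_of_mem_facesIn η.2.2 hσ, one_mul]
    _ ≤ 2 * ∑ σ ∈ X.facesIn m η.1, φ σ ^ 2 := by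
        refine mul_le_mul_of_nonneg_right ?_ (sum_nonneg fun σ _ => sq_nonneg _)
        exact_mod_cast card_facesIn_le_two hflag hvert η

lemma missingCB_equality_case (hflag : X.Flag) (hvert : ∀ v : V, {v} ∈ X.faces) {m : ℕ}
    (φ : X.face m → ℝ)
    (hφ : (X.missingCB m *ᵥ φ) ⬝ᵥ (X.missingCB m *ᵥ φ)
      = 2 * (Fintype.card V - m) * (φ ⬝ᵥ φ)) :
    (∀ η : X.nonface (m + 1),
      (X.missingCB m *ᵥ φ) η ^ 2 = 2 * ∑ σ ∈ X.facesIn m η.1, φ σ ^ 2) ∧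
    ∀ σ : X.face m, φ σ ≠ 0 → ∀ w ∉ σ.1, insert w σ.1 ∉ X.faces := by
  -- `‖Bφ‖² ≤ Σ_η 2 Σ_{σ ⊆ η} φ σ² = Σ_σ 2 φ σ² c(σ) ≤ 2 (n - m) ‖φ‖²` and `hφ` closes the chain,
  -- where `c(σ) ≤ #σᶜ` counts the non-faces `insert w σ`.
  have hF := missingCB_mulVec_sq_le hflag hvert φ
  have hK : ∀ σ : X.face m, 2 * φ σ ^ 2 * #{w ∈ σ.1ᶜ | insert w σ.1 ∉ X.faces}
      ≤ 2 * φ σ ^ 2 * #σ.1ᶜ := fun σ =>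
    mul_le_mul_of_nonneg_left (by exact_mod_cast card_filter_le _ _) (by positivity)
  have hGH : ∑ η : X.nonface (m + 1), 2 * ∑ σ ∈ X.facesIn m η.1, φ σ ^ 2
      = ∑ σ : X.face m, 2 * φ σ ^ 2 * #{w ∈ σ.1ᶜ | insert w σ.1 ∉ X.faces} := by
    simp only [← mul_sum, sum_sum_facesIn, mul_assoc]
  have hKF : ∑ σ : X.face m, 2 * φ σ ^ 2 * #σ.1ᶜ
      = ∑ η : X.nonface (m + 1), (X.missingCB m *ᵥ φ) η ^ 2 := by
    have hm (σ : X.face m) : (#σ.1ᶜ : ℝ) = Fintype.card V - m := by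
      rw [card_compl, Nat.cast_sub (card_le_univ _), σ.2.2]
    simp only [hm, ← sq, dotProduct] at hφ ⊢
    rw [hφ, mul_sum]
    exact sum_congr rfl fun σ _ => by ring
  have hFG := sum_le_sum fun η (_ : η ∈ univ) => hF η
  have hHK := sum_le_sum fun σ (_ : σ ∈ univ) => hK σ
  refine ⟨fun η => (sum_eq_sum_iff_of_le fun η _ => hF η).1 (by linarith) η (mem_univ _),
    fun σ hσ w hw => ?_⟩
  have h := (sum_eq_sum_iff_of_le fun σ _ => hK σ).1 (by linarith) σ (mem_univ _)
  have hcard : #{w ∈ σ.1ᶜ | insert w σ.1 ∉ X.faces} = #σ.1ᶜ := by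
    exact_mod_cast mul_left_cancel₀ (by positivity) h
  exact card_filter_eq_iff.1 hcard w (mem_compl.2 hw)

lemma exists_swap (hflag : X.Flag) (hvert : ∀ v : V, {v} ∈ X.faces) {m : ℕ} {φ : X.face m → ℝ}
    (hφ : (X.missingCB m *ᵥ φ) ⬝ᵥ (X.missingCB m *ᵥ φ)
      = 2 * (Fintype.card V - m) * (φ ⬝ᵥ φ))
    {σ : X.face m} (hσ : φ σ ≠ 0) {w : V} (hw : w ∉ σ.1) :
    ∃ u ∈ σ.1, {u, w} ∉ X.faces ∧ ∃ τ : X.face m, τ.1 = insert w (σ.1.erase u) ∧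
      signAt (σ.1.erase u) u * φ τ + signAt (σ.1.erase u) w * φ σ = 0 := by
  obtain ⟨hA, hB⟩ := missingCB_equality_case hflag hvert φ hφ
  let η : X.nonface (m + 1) :=
    ⟨insert w σ.1, hB σ hσ w hw, by rw [card_insert_of_notMem hw, σ.2.2]⟩
  have hση : σ ∈ X.facesIn m η.1 := mem_filter.2 ⟨mem_univ _, subset_insert _ _⟩
  have hsq : (∑ τ ∈ X.facesIn m η.1, incidence η.1 τ.1 * φ τ) ^ 2
      = 2 * ∑ τ ∈ X.facesIn m η.1, (incidence η.1 τ.1 * φ τ) ^ 2 := by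
    rw [← missingCB_mulVec_apply, hA η]
    exact congrArg _ (sum_congr rfl fun τ hτ => by
      rw [mul_pow, incidence_sq_of_mem_facesIn η.2.2 hτ, one_mul])
  have hσ' : incidence η.1 σ.1 * φ σ ≠ 0 :=
    mul_ne_zero ((incidence_insert hw).trans_ne (signAt_ne_zero _ _)) hσ
  -- equality in Cauchy–Schwarz: `insert w σ` has a second facet `τ` in `X`, with the same term
  obtain ⟨τ, hτη, hτσ, hrel⟩ := exists_ne_eq_of_sq_sum_eq_two_mul
    (card_facesIn_le_two hflag hvert η) hση hσ' hsq
  obtain ⟨u, huτ, hτ⟩ := exists_eq_insert_iff.2 ⟨(mem_filter.1 hτη).2, by rw [τ.2.2, η.2.2]⟩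
  change insert u τ.1 = insert w σ.1 at hτ
  change incidence (insert w σ.1) τ.1 * φ τ = incidence (insert w σ.1) σ.1 * φ σ at hrel
  have huw : u ≠ w := by
    rintro rfl
    refine hτσ (Subtype.ext ?_)
    rw [← erase_insert huτ, ← erase_insert hw, hτ]
  have hu : u ∈ σ.1 := (mem_insert.1 (hτ ▸ mem_insert_self u τ.1)).resolve_left huw
  have hτ' : τ.1 = insert w (σ.1.erase u) := by
    rw [← erase_insert_of_ne huw.symm, ← hτ, erase_insert huτ]
  refine ⟨u, hu, ?_, τ, hτ', ?_⟩
  · refine hflag.pair_notMem_faces (η := insert w σ.1) η.2.1 huw ?_ ?_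
    · rw [← hτ, erase_insert huτ]; exact τ.2.1
    · rw [erase_insert hw]; exact σ.2.1
  · set ρ := σ.1.erase u
    have hσρ : σ.1 = insert u ρ := (insert_erase hu).symm
    have huρ : u ∉ ρ := notMem_erase u σ.1
    have hwρ : w ∉ ρ := fun h => hw (mem_of_mem_erase h)
    rw [incidence_insert hw, ← hτ, incidence_insert huτ, hτ', hσρ, signAt_insert hwρ,
      signAt_insert huρ] at hrel
    linear_combination -(if u < w then (-1 : ℝ) else 1) * hrel
      + signAt ρ u * φ τ * ite_lt_mul_ite_lt huw
      - signAt ρ w * φ σ * ite_lt_mul_self u w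

end Laplacian

section EqualityCase

variable {V : Type} [Fintype V] [DecidableEq V] [LinearOrder V] {X : SC V}
  (hflag : X.Flag) (hvert : ∀ v : V, {v} ∈ X.faces) {m : ℕ} {φ : X.face m → ℝ}
  (hφ : (X.missingCB m *ᵥ φ) ⬝ᵥ (X.missingCB m *ᵥ φ) = 2 * (Fintype.card V - m) * (φ ⬝ᵥ φ))
include hflag hvert hφ

/-- The swaps `u → w`, `u → w'` and `w → w'` around `ρ = σ.erase u` each flip the sign of
`signAt ρ x * φ (insert x ρ)`, and an odd cycle of flips forces `φ σ = 0`. -/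
lemma eq_of_pair_notMem_faces {σ : X.face m} (hσ : φ σ ≠ 0) {u w w' : V} (hu : u ∈ σ.1)
    (hw : w ∉ σ.1) (hw' : w' ∉ σ.1) (huw : {u, w} ∉ X.faces) (huw' : {u, w'} ∉ X.faces) :
    w = w' := by
  by_contra hne
  obtain ⟨u₁, -, -, τ₁, hτ₁, hrel₁⟩ := exists_swap hflag hvert hφ hσ hw
  obtain rfl : u = u₁ := eq_of_insert_erase_mem_faces (hτ₁ ▸ τ₁.2.1) hu huw
  obtain ⟨u₂, -, -, τ₂, hτ₂, hrel₂⟩ := exists_swap hflag hvert hφ hσ hw'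
  obtain rfl : u = u₂ := eq_of_insert_erase_mem_faces (hτ₂ ▸ τ₂.2.1) hu huw'
  set ρ := σ.1.erase u
  have hwρ : w ∉ ρ := fun h => hw (mem_of_mem_erase h)
  have hw'τ₁ : w' ∉ τ₁.1 := by
    rw [hτ₁, mem_insert, not_or]
    exact ⟨Ne.symm hne, fun h => hw' (mem_of_mem_erase h)⟩
  obtain ⟨u₃, hu₃, hu₃w', τ₃, hτ₃, hrel₃⟩ :=
    exists_swap hflag hvert hφ (ne_zero_of_signAt_mul_add_eq_zero hσ hrel₁) hw'τ₁
  obtain rfl : w = u₃ := by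
    rcases mem_insert.1 (hτ₁ ▸ hu₃) with h | hu₃ρ
    · exact h.symm
    · exact absurd (eq_of_insert_erase_mem_faces (hτ₂ ▸ τ₂.2.1) (mem_of_mem_erase hu₃ρ) hu₃w')
        (ne_of_mem_erase hu₃ρ)
  have hτ₁ρ : τ₁.1.erase w = ρ := by rw [hτ₁, erase_insert hwρ]
  obtain rfl : τ₃ = τ₂ := Subtype.ext (by rw [hτ₃, hτ₂, hτ₁ρ])
  rw [hτ₁ρ] at hrel₃
  have h2 : 2 * signAt ρ w * signAt ρ w' * φ σ = 0 := by
    linear_combination -signAt ρ u * hrel₃ + signAt ρ w * hrel₂ + signAt ρ w' * hrel₁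
  simp [signAt_ne_zero, hσ] at h2

lemma pair_mem_faces_of_notMem {σ : X.face m} (hσ : φ σ ≠ 0) {w w' : V} (hw : w ∉ σ.1)
    (hw' : w' ∉ σ.1) (hne : w ≠ w') : {w, w'} ∈ X.faces := by
  obtain ⟨u, hu, huw, τ₁, hτ₁, hrel₁⟩ := exists_swap hflag hvert hφ hσ hw
  obtain ⟨u', hu', hu'w', -⟩ := exists_swap hflag hvert hφ hσ hw'
  have hu'u : u' ≠ u := fun h =>
    hne (eq_of_pair_notMem_faces hflag hvert hφ hσ hu hw hw' huw (h ▸ hu'w'))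
  have hw'τ₁ : w' ∉ τ₁.1 := by
    rw [hτ₁, mem_insert, not_or]
    exact ⟨Ne.symm hne, fun h => hw' (mem_of_mem_erase h)⟩
  have hu'τ₁ : u' ∈ τ₁.1 := hτ₁ ▸ mem_insert_of_mem (mem_erase.2 ⟨hu'u, hu'⟩)
  obtain ⟨u₃, -, -, τ₃, hτ₃, -⟩ :=
    exists_swap hflag hvert hφ (ne_zero_of_signAt_mul_add_eq_zero hσ hrel₁) hw'τ₁
  have hu'u₃ : u' = u₃ := eq_of_insert_erase_mem_faces (hτ₃ ▸ τ₃.2.1) hu'τ₁ hu'w'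
  have hwτ₃ : w ∈ τ₃.1 := by
    rw [hτ₃, hτ₁]
    refine mem_insert_of_mem (mem_erase.2 ⟨?_, mem_insert_self _ _⟩)
    rintro rfl
    exact hw (hu'u₃ ▸ hu')
  exact pair_mem_faces τ₃.2.1 hwτ₃ (hτ₃ ▸ mem_insert_self _ _)

lemma exists_isIndepOfMatching {σ₀ : X.face m} (hσ₀ : φ σ₀ ≠ 0) :
    ∃ f : V → V, X.IsIndepOfMatching σ₀.1ᶜ f := by
  have hnonadj (w : V) : ∃ u, w ∉ σ₀.1 →
      u ∈ σ₀.1 ∧ {u, w} ∉ X.faces ∧ ∀ x ∈ σ₀.1, {x, w} ∉ X.faces → x = u := by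
    by_cases hw : w ∈ σ₀.1
    · exact ⟨w, fun h => absurd hw h⟩
    obtain ⟨u, hu, huw, τ, hτ, -⟩ := exists_swap hflag hvert hφ hσ₀ hw
    exact ⟨u, fun _ => ⟨hu, huw, fun x hx hxw => eq_of_insert_erase_mem_faces (hτ ▸ τ.2.1) hx hxw⟩⟩
  choose f hf using hnonadj
  refine ⟨f, fun w hw => by simpa using (hf w (mem_compl.1 hw)).1, fun w hw w' hw' h => ?_,
    fun σ => ⟨fun hσ w hw ⟨hwσ, hfwσ⟩ => ?_, fun h => hflag σ fun x hx y hy => ?_⟩⟩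
  · have hw := mem_compl.1 hw
    have hw' := mem_compl.1 hw'
    exact eq_of_pair_notMem_faces hflag hvert hφ hσ₀ (hf w hw).1 hw hw' (hf w hw).2.1
      (h ▸ (hf w' hw').2.1)
  · exact (hf w (mem_compl.1 hw)).2.1 (pair_mem_faces hσ hfwσ hwσ)
  · by_contra hxy
    have hne : x ≠ y := by
      rintro rfl
      exact hxy (by simpa using hvert x)
    by_cases hx₀ : x ∈ σ₀.1 <;> by_cases hy₀ : y ∈ σ₀.1
    · exact hxy (pair_mem_faces σ₀.2.1 hx₀ hy₀)
    · exact h y (mem_compl.2 hy₀) ⟨hy, (hf y hy₀).2.2 x hx₀ hxy ▸ hx⟩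
    · exact h x (mem_compl.2 hx₀) ⟨hx, (hf x hx₀).2.2 y hy₀ (by rwa [pair_comm]) ▸ hy⟩
    · exact hxy (pair_mem_faces_of_notMem hflag hvert hφ hσ₀ hx₀ hy₀ hne)

end EqualityCase

end SC

/-- If `X` is a clique complex on `n` vertices with
`μ_k(X) = 2(k+1) - n` for some `k` (`m = k + 1`), then `X` is isomorphic to
`(Δ_1^{(0)})^{∗(n-k-1)} ∗ Δ_{2(k+1)-n-1}`; in particular `dim X = k`. -/
theorem clique_equality_case {V : Type} [Fintype V] [DecidableEq V] [LinearOrder V]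
    (X : SC V) (hflag : X.Flag) (hvert : ∀ v : V, {v} ∈ X.faces) (m : ℕ)
    (hμ : IsLeast (X.eigenvals m) (2 * (m : ℝ) - (Fintype.card V : ℝ))) :
    (∃ e : V ≃ ((Fin (Fintype.card V - m) × Fin 2) ⊕ Fin (2 * m - Fintype.card V)),
        ∀ σ : Finset V, σ ∈ X.faces ↔
          σ.image e ∈ (Zcx 1 (Fintype.card V - m) (2 * m - Fintype.card V)).faces)
      ∧ X.faces.sup Finset.card = m := by
  obtain ⟨φ, hφ⟩ := hμ.1.exists_hasEigenvector
  have hext : (X.missingCB m *ᵥ φ) ⬝ᵥ (X.missingCB m *ᵥ φ)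
      = 2 * (Fintype.card V - m) * (φ ⬝ᵥ φ) := by
    have := SC.dotProduct_lap_mulVec X m φ
    rw [← toLin'_apply, hφ.apply_eq_smul, dotProduct_smul, smul_eq_mul] at this
    linarith
  obtain ⟨σ₀, hσ₀⟩ : ∃ σ₀, φ σ₀ ≠ 0 := Function.ne_iff.1 hφ.2
  obtain ⟨f, hf⟩ := SC.exists_isIndepOfMatching hflag hvert hext hσ₀
  have hs : #σ₀.1ᶜ = Fintype.card V - m := by rw [card_compl, σ₀.2.2]
  have hm : m ≤ Fintype.card V := σ₀.2.2 ▸ card_le_univ _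
  have hle := hf.card_le_card_compl
  rw [compl_compl, hs, σ₀.2.2] at hle
  refine ⟨hf.exists_equiv_Zcx hs (by omega), le_antisymm (Finset.sup_le fun σ hσ => ?_) ?_⟩
  · have := hf.card_add_card_le hσ
    omega
  · exact le_sup_of_le σ₀.2.1 σ₀.2.2.ge
end

section
/- Let X be a finite simplicial complex and suppose the reduced k-Laplacian L_k = D_k + K_k where K_k is positive semi-definite and D_k is diagonal with D_k(σ,σ) = 2(k+1) + (k+2)deg_X(σ) − Σ_{τ ∈ σ(k−1)} deg_X(τ). Then μ_k(X) ≥ min over σ ∈ X(k) of ((k+2)deg_X(σ) + 2(k+1) − Σ_{τ ∈ σ(k−1)} deg_X(τ)). -/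
open Matrix BigOperators

/-! If `c` is the smallest entry of `d`, then `diagonal d + K - c • 1 = diagonal (d - c) + K` is a
sum of positive semidefinite matrices, so its eigenvalue `μ - c` is nonnegative. -/

namespace Matrix

variable {n : Type*} [Fintype n] [DecidableEq n]

theorem PosSemidef.nonneg_of_hasEigenvalue {A : Matrix n n ℝ} (hA : A.PosSemidef) {μ : ℝ}
    (hμ : Module.End.HasEigenvalue (toLin' A) μ) : 0 ≤ μ := by
  obtain ⟨v, hv⟩ := hμ.exists_hasEigenvector
  have hAv : A *ᵥ v = μ • v := by simpa using hv.apply_eq_smul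
  have hvv : 0 < star v ⬝ᵥ v := dotProduct_star_self_pos_iff.2 hv.2
  have h := hA.dotProduct_mulVec_nonneg v
  rw [hAv, dotProduct_smul, smul_eq_mul] at h
  exact nonneg_of_mul_nonneg_left h hvv

theorem exists_le_of_hasEigenvalue_diagonal_add_posSemidef {d : n → ℝ} {K : Matrix n n ℝ}
    (hK : K.PosSemidef) {μ : ℝ} (hμ : Module.End.HasEigenvalue (toLin' (diagonal d + K)) μ) :
    ∃ i, d i ≤ μ := by
  have : Nonempty n := by
    obtain ⟨v, hv⟩ := hμ.exists_hasEigenvector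
    exact (Function.ne_iff.mp hv.2).nonempty
  obtain ⟨i, -, hi⟩ := Finset.exists_min_image Finset.univ d Finset.univ_nonempty
  refine ⟨i, ?_⟩
  have hshift : diagonal d + K - d i • 1 = diagonal (fun j => d j - d i) + K := by
    ext j k; by_cases h : j = k <;> simp [h]; ring
  have hpsd : (diagonal d + K - d i • 1).PosSemidef := by
    rw [hshift]
    exact (PosSemidef.diagonal fun j => sub_nonneg.2 (hi j (Finset.mem_univ j))).add hK
  have hμ' : Module.End.HasEigenvalue (toLin' (diagonal d + K - d i • 1)) (μ - d i) := by
    rw [map_sub, map_smul, toLin'_one, Module.End.hasEigenvalue_sub_iff, sub_add_cancel]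
    exact hμ
  exact sub_nonneg.1 (hpsd.nonneg_of_hasEigenvalue hμ')

end Matrix

theorem laplacian_decomposition_bound_general {V : Type} [Fintype V] [DecidableEq V] [LinearOrder V]
    (X : SC V) (m : ℕ) (K : Matrix (X.face m) (X.face m) ℝ)
    (hK : K.PosSemidef)
    (hdecomp : X.Lap m = Matrix.diagonal (fun σ =>
        2 * (m : ℝ) + ((m : ℝ) + 1) * (X.deg σ.1 : ℝ)
          - ∑ u ∈ σ.1, (X.deg (σ.1.erase u) : ℝ)) + K)
    (μ : ℝ) (hμ : μ ∈ X.eigenvals m) :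
    ∃ σ : X.face m,
      ((m : ℝ) + 1) * (X.deg σ.1 : ℝ) + 2 * (m : ℝ)
        - ∑ u ∈ σ.1, (X.deg (σ.1.erase u) : ℝ) ≤ μ := by
  rw [SC.eigenvals, Set.mem_ofPred_eq, hdecomp] at hμ
  obtain ⟨σ, hσ⟩ := Matrix.exists_le_of_hasEigenvalue_diagonal_add_posSemidef hK hμ
  exact ⟨σ, by linarith⟩

/-- If the reduced `k`-Laplacian (`k = m - 1 ≥ 0`) decomposes as
`L_k = D_k + K_k` with `K_k` positive semi-definite and `D_k` diagonal with entries
`2(k+1) + (k+2)·deg(σ) - Σ_{τ ∈ σ(k-1)} deg(τ)`, then every eigenvalue `μ` of `L_k`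
satisfies `μ ≥ min_{σ ∈ X(k)} ((k+2)·deg(σ) + 2(k+1) - Σ_{τ ∈ σ(k-1)} deg(τ))`. -/
theorem laplacian_decomposition_bound {V : Type} [Fintype V] [DecidableEq V] [LinearOrder V]
    (X : SC V) (m : ℕ) (hm : 1 ≤ m) (K : Matrix (X.face m) (X.face m) ℝ)
    (hK : K.PosSemidef)
    (hdecomp : X.Lap m = Matrix.diagonal (fun σ =>
        2 * (m : ℝ) + ((m : ℝ) + 1) * (X.deg σ.1 : ℝ)
          - ∑ u ∈ σ.1, (X.deg (σ.1.erase u) : ℝ)) + K)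
    (μ : ℝ) (hμ : μ ∈ X.eigenvals m) :
    ∃ σ : X.face m,
      ((m : ℝ) + 1) * (X.deg σ.1 : ℝ) + 2 * (m : ℝ)
        - ∑ u ∈ σ.1, (X.deg (σ.1.erase u) : ℝ) ≤ μ :=
  laplacian_decomposition_bound_general X m K hK hdecomp μ hμ
end
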